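/- arXiv:2511.05401 — 6 statements merged into one kernel-verified Lean document; each statement's English description precedes it below -/
import Mathlib

section
/- For n ≥ 1 and p ≥ 2, the maximum number of edges in a simple graph on n vertices containing no copy of K_p is t(n, p-1), the number of edges of the complete (p-1)-partite Turán graph on n vertices with parts of sizes differing by at most one. -/
open SimpleGraph Finset

/-- `G` contains a copy of `H` as a subgraph. -/
def SimpleGraph.Contains {α β : Type*} (G : SimpleGraph α) (H : SimpleGraph β) : Prop :=
  ∃ f : β ↪ α, ∀ ⦃a b⦄, H.Adj a b → G.Adj (f a) (f b)

/-- The disjoint union of `k` copies of the complete graph `K_p`. -/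
def cliquesUnion (k p : ℕ) : SimpleGraph (Fin k × Fin p) :=
  SimpleGraph.fromRel (fun a b => a.1 = b.1)

/-- Number of edges of a graph. -/
noncomputable def edgeCount {α : Type*} (G : SimpleGraph α) : ℕ := Nat.card G.edgeSet

/-- `m` is the Turán number `ex(n, H)`. -/
def IsExtremalNumber (n : ℕ) {β : Type*} (H : SimpleGraph β) (m : ℕ) : Prop :=
  (∀ G : SimpleGraph (Fin n), ¬ G.Contains H → edgeCount G ≤ m) ∧
  (∃ G : SimpleGraph (Fin n), ¬ G.Contains H ∧ edgeCount G = m)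

/-- `t(n,r)`: number of edges of the Turán graph `T_{n,r}`. -/
noncomputable def turanEdges (n r : ℕ) : ℕ := edgeCount (SimpleGraph.turanGraph n r)

/-- The join of two graphs. -/
def SimpleGraph.join {α β : Type*} (G : SimpleGraph α) (H : SimpleGraph β) :
    SimpleGraph (α ⊕ β) where
  Adj x y :=
    match x, y with
    | Sum.inl a, Sum.inl b => G.Adj a b
    | Sum.inr a, Sum.inr b => H.Adj a b
    | _, _ => True
  symm := ⟨by rintro (a|a) (b|b) h <;> simp_all <;> exact h.symm⟩
  loopless := ⟨by rintro (a|a) h <;> simp_all⟩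

/-- `G` has four pairwise disjoint independent sets of size `p`. -/
def HasFourIndep {V : Type*} (G : SimpleGraph V) (p : ℕ) : Prop :=
  ∃ I : Fin 4 → Finset V,
    (∀ i, (I i).card = p) ∧
    (∀ i, ∀ x ∈ I i, ∀ y ∈ I i, ¬ G.Adj x y) ∧
    (∀ i j, i ≠ j → Disjoint (I i) (I j))


lemma contains_top_iff {α : Type*} (G : SimpleGraph α) (p : ℕ) :
    G.Contains (⊤ : SimpleGraph (Fin p)) ↔ ¬ G.CliqueFree p := by
  rw [cliqueFree_iff, not_isEmpty_iff]
  constructor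
  · rintro ⟨f, hf⟩
    exact ⟨⟨⟨f, fun {a b} h => hf h⟩, f.injective⟩⟩
  · rintro ⟨f⟩
    exact ⟨f.toEmbedding, fun a b h => f.toHom.map_adj h⟩

lemma edgeCount_eq {α : Type*} [Fintype α] (G : SimpleGraph α) [DecidableRel G.Adj] :
    edgeCount G = #G.edgeFinset := by
  rw [edgeCount, Nat.card_eq_fintype_card, SimpleGraph.edgeFinset_card]

theorem stmt0 (n p : ℕ) (hn : 1 ≤ n) (hp : 2 ≤ p) :
    IsExtremalNumber n (⊤ : SimpleGraph (Fin p)) (turanEdges n (p - 1)) := by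
  have hr : 0 < p - 1 := by omega
  have hpr : p - 1 + 1 = p := by omega
  have itm := isTuranMaximal_turanGraph (n := n) hr
  constructor
  · intro G hG
    classical
    rw [contains_top_iff, not_not] at hG
    rw [edgeCount_eq, turanEdges, edgeCount_eq]
    exact itm.2 (G' := G) (hpr ▸ hG)
  · refine ⟨turanGraph n (p - 1), ?_, rfl⟩
    rw [contains_top_iff, not_not]
    exact hpr ▸ turanGraph_cliqueFree hr
end

section
/- If G is a graph on n vertices with independence number α(G) ≤ p-1 and exactly C(n,2) - t(n,p-1) edges, then G is isomorphic to the complement of the Turán graph T_{n,p-1}. -/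
open SimpleGraph Finset

private lemma edgeCount_eq_s2 {W : Type*} [Fintype W] (H : SimpleGraph W) [DecidableRel H.Adj] :
    edgeCount H = #H.edgeFinset := by
  rw [edgeCount, Nat.card_eq_fintype_card, SimpleGraph.edgeFinset_card]

/-- complement an isomorphism -/
private def isoCompl {A B : Type*} {G : SimpleGraph A} {H : SimpleGraph B} (f : G ≃g H) :
    Gᶜ ≃g Hᶜ :=
  ⟨f.toEquiv, by
    intro a b
    show Hᶜ.Adj (f a) (f b) ↔ Gᶜ.Adj a b
    rw [SimpleGraph.compl_adj, SimpleGraph.compl_adj]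
    exact and_congr f.toEquiv.injective.ne_iff (not_congr f.map_adj_iff)⟩

theorem stmt2 {V : Type*} [Fintype V] (n p : ℕ) (hcard : Fintype.card V = n)
    (G : SimpleGraph V) (hα : Gᶜ.CliqueFree p)
    (he : edgeCount G = n.choose 2 - turanEdges n (p - 1)) :
    Nonempty (G ≃g (SimpleGraph.turanGraph n (p - 1))ᶜ) := by
  classical
  subst hcard
  match p, hα, he with
  | 0, hα, he =>
    exact absurd (hα ∅) (by simp [SimpleGraph.isNClique_empty])
  | 1, hα, he =>
    have hV : IsEmpty V := ⟨fun v => hα {v} ⟨by simp, by simp⟩⟩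
    have h0 : Fintype.card V = 0 := Fintype.card_eq_zero
    haveI : IsEmpty (Fin (Fintype.card V)) := by rw [h0]; infer_instance
    exact ⟨⟨Equiv.equivOfIsEmpty V (Fin (Fintype.card V)), fun {a b} => isEmptyElim a⟩⟩
  | (r + 2), hα, he =>
    have hr1 : r + 2 - 1 = r + 1 := rfl
    rw [hr1] at he ⊢
    have hr : 0 < r + 1 := Nat.succ_pos r
    obtain ⟨H, _, hH⟩ := SimpleGraph.exists_isTuranMaximal (V := V) (r := r + 1) hr
    obtain ⟨f⟩ := hH.nonempty_iso_turanGraph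
    have hHt : #H.edgeFinset = turanEdges (Fintype.card V) (r + 1) := by
      rw [turanEdges, edgeCount_eq_s2]
      exact f.card_edgeFinset_eq
    have ht_le : turanEdges (Fintype.card V) (r + 1) ≤ (Fintype.card V).choose 2 := by
      rw [← hHt]; exact SimpleGraph.card_edgeFinset_le_card_choose_two
    have hGle : #G.edgeFinset ≤ (Fintype.card V).choose 2 :=
      SimpleGraph.card_edgeFinset_le_card_choose_two
    have hsd : Gᶜ = (⊤ : SimpleGraph V) \ G := by rw [sdiff_eq, top_inf_eq]
    have h1 : Gᶜ.edgeFinset = ((⊤ : SimpleGraph V) \ G).edgeFinset := by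
      apply Set.toFinset_congr; rw [hsd]
    have h2 : #Gᶜ.edgeFinset = (Fintype.card V).choose 2 - #G.edgeFinset := by
      rw [h1]
      have h3 : ((⊤ : SimpleGraph V) \ G).edgeFinset
          = (⊤ : SimpleGraph V).edgeFinset \ G.edgeFinset := by
        simp
      rw [h3, Finset.card_sdiff_of_subset (SimpleGraph.edgeFinset_mono le_top),
        SimpleGraph.card_edgeFinset_top_eq_card_choose_two]
    have hcompl : #Gᶜ.edgeFinset = turanEdges (Fintype.card V) (r + 1) := by
      rw [edgeCount_eq_s2] at he
      omega
    have hmax : Gᶜ.IsTuranMaximal (r + 1) := by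
      refine ⟨hα, fun I _ cf => ?_⟩
      calc #I.edgeFinset ≤ #H.edgeFinset := hH.2 cf
        _ = #Gᶜ.edgeFinset := by rw [hHt, hcompl]
    obtain ⟨g⟩ := hmax.nonempty_iso_turanGraph
    have g2 := isoCompl g
    rw [compl_compl] at g2
    exact ⟨g2⟩
end

section
/- For positive integers n and k with n ≥ 2k, the maximum number of edges of an n-vertex graph with no matching of size k equals C(2k-1,2) if 2k ≤ n < 5k/2 - 1, and equals C(k-1,2) + (k-1)(n-k+1) if n ≥ 5k/2 - 1. -/
open SimpleGraph Finset

section EG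
open scoped Classical

variable {n : ℕ}

/-- `G` has `k` pairwise disjoint edges. -/
def HasM {V : Type*} (G : SimpleGraph V) (k : ℕ) : Prop :=
  ∃ f : Fin k × Fin 2 → V, Function.Injective f ∧
    ∀ i : Fin k, G.Adj (f (i, 0)) (f (i, 1))

lemma contains_iff {V : Type*} (G : SimpleGraph V) (k : ℕ) :
    G.Contains (cliquesUnion k 2) ↔ HasM G k := by
  constructor
  · rintro ⟨f, hf⟩
    refine ⟨f, f.injective, fun i => hf ?_⟩
    simp [cliquesUnion, SimpleGraph.fromRel_adj]
  · rintro ⟨f, hinj, hadj⟩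
    refine ⟨⟨f, hinj⟩, ?_⟩
    rintro ⟨i, x⟩ ⟨j, y⟩ hab
    simp only [cliquesUnion, SimpleGraph.fromRel_adj] at hab
    obtain ⟨hne, h1 | h1⟩ := hab <;> subst h1 <;>
    · have hxy : x ≠ y := by rintro rfl; exact hne rfl
      fin_cases x <;> fin_cases y <;> first
        | exact absurd rfl hxy
        | exact hadj _
        | exact (hadj _).symm

noncomputable def pairs (G : SimpleGraph (Fin n)) : Finset (Fin n × Fin n) :=
  univ.filter fun p => G.Adj p.1 p.2 ∧ p.1 < p.2

noncomputable def EF (G : SimpleGraph (Fin n)) : Finset (Sym2 (Fin n)) :=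
  (Set.toFinite G.edgeSet).toFinset

lemma mem_EF {G : SimpleGraph (Fin n)} {e : Sym2 (Fin n)} :
    e ∈ EF G ↔ e ∈ G.edgeSet := Set.Finite.mem_toFinset _

lemma EF_card (G : SimpleGraph (Fin n)) : edgeCount G = (EF G).card := by
  rw [edgeCount, Nat.card_coe_set_eq, Set.ncard_eq_toFinset_card']
  congr 1
  ext e
  simp [mem_EF]

lemma pairs_card (G : SimpleGraph (Fin n)) : edgeCount G = (pairs G).card := by
  rw [EF_card]
  refine (Finset.card_bij (fun p _ => s(p.1, p.2)) ?_ ?_ ?_).symm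
  · rintro ⟨a, b⟩ hp
    simp only [pairs, mem_filter] at hp
    exact mem_EF.2 hp.2.1
  · rintro ⟨a, b⟩ ha ⟨c, d⟩ hc h
    simp only [pairs, mem_filter] at ha hc
    rw [Sym2.eq_iff] at h
    obtain ⟨rfl, rfl⟩ | ⟨rfl, rfl⟩ := h
    · rfl
    · exact absurd (ha.2.2.trans hc.2.2) (lt_irrefl _)
  · intro e he
    rw [mem_EF] at he
    induction e with
    | _ x y =>
      rcases lt_trichotomy x y with h | h | h
      · exact ⟨(x, y), by simp [pairs, ((G.mem_edgeSet).1 he), h], rfl⟩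
      · exact absurd h (G.ne_of_adj he)
      · exact ⟨(y, x), by simp [pairs, (((G.mem_edgeSet).1 he)).symm, h], Sym2.eq_swap⟩




lemma sum_lemma1 (t : ℕ) (ht : t ≤ n) :
    2 * ∑ x ∈ range t, (n - x - 1) = t * (2 * n - t - 1) := by
  induction t with
  | zero => simp
  | succ t ih =>
    rw [Finset.sum_range_succ, Nat.mul_add, ih (by omega)]
    have hm : 2 * n - t - 1 = (2 * n - t - 2) + 1 := by omega
    have hm2 : 2 * n - (t+1) - 1 = 2 * n - t - 2 := by omega
    rw [hm, hm2, Nat.mul_add, Nat.mul_one, Nat.add_mul, Nat.one_mul]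
    omega

lemma sum_lemma2 (L : ℕ) : 2 * ∑ y ∈ range L, (L - y - 1) = L * (L - 1) := by
  have h : ∑ y ∈ range L, (L - y - 1) = ∑ y ∈ range L, y := by
    rw [← Finset.sum_range_reflect]
    exact Finset.sum_congr rfl fun x hx => by
      rw [Finset.mem_range] at hx; omega
  rw [h, Nat.mul_comm, Finset.sum_range_id_mul_two]

/-- Count of ordered pairs `(a,b)` with `a < b` and (`a < t` or `b < M`). -/
lemma cardQ (t M : ℕ) (htM : t ≤ M) (hMn : M ≤ n) :
    2 * (univ.filter fun p : Fin n × Fin n =>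
        p.1 < p.2 ∧ (p.1.val < t ∨ p.2.val < M)).card
      = t * (2 * n - t - 1) + (M - t) * (M - t - 1) := by
  have key : (univ.filter fun p : Fin n × Fin n =>
        p.1 < p.2 ∧ (p.1.val < t ∨ p.2.val < M)).card
      = ∑ x ∈ range n, (if x < t then n - x - 1 else M - x - 1) := by
    rw [Finset.card_filter, Fintype.sum_prod_type]
    rw [← Fin.sum_univ_eq_sum_range
      (fun x => if x < t then n - x - 1 else M - x - 1) n]
    refine Finset.sum_congr rfl fun a _ => ?_
    have inner : ∀ (P : ℕ → Prop) [DecidablePred P],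
        (∑ b : Fin n, if P b.val then (1:ℕ) else 0) = ((range n).filter P).card := by
      intro P _
      rw [Finset.card_filter, ← Fin.sum_univ_eq_sum_range (fun x => if P x then (1:ℕ) else 0) n]
    by_cases ha : a.val < t
    · have : ∀ b : Fin n, (a < b ∧ (a.val < t ∨ b.val < M)) ↔ (a.val < b.val) := by
        intro b; rw [Fin.lt_def]; tauto
      simp only [this]
      rw [inner (fun x => a.val < x), if_pos ha]
      have : (range n).filter (fun x => a.val < x) = Ico (a.val + 1) n := by
        ext x; simp [Finset.mem_Ico, Finset.mem_filter, Finset.mem_range]; omega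
      rw [this, Nat.card_Ico]
      omega
    · have : ∀ b : Fin n, (a < b ∧ (a.val < t ∨ b.val < M)) ↔ (a.val < b.val ∧ b.val < M) := by
        intro b; rw [Fin.lt_def]; tauto
      simp only [this]
      rw [inner (fun x => a.val < x ∧ x < M), if_neg ha]
      have : (range n).filter (fun x => a.val < x ∧ x < M) = Ico (a.val + 1) M := by
        ext x; simp [Finset.mem_Ico, Finset.mem_filter, Finset.mem_range]; omega
      rw [this, Nat.card_Ico]
      omega
  rw [key]
  have hsplit : ∑ x ∈ range n, (if x < t then n - x - 1 else M - x - 1)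
      = (∑ x ∈ range t, (n - x - 1)) + ∑ x ∈ Ico t n, (M - x - 1) := by
    rw [Finset.range_eq_Ico, ← Finset.sum_Ico_consecutive _ (Nat.zero_le t) (le_trans htM hMn)]
    congr 1
    · rw [← Finset.range_eq_Ico]
      exact Finset.sum_congr rfl fun x hx => by
        rw [Finset.mem_range] at hx; rw [if_pos hx]
    · exact Finset.sum_congr rfl fun x hx => by
        rw [Finset.mem_Ico] at hx; rw [if_neg (by omega)]
  have h2 : ∑ x ∈ Ico t n, (M - x - 1) = ∑ x ∈ Ico t M, (M - x - 1) := by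
    rw [← Finset.sum_Ico_consecutive _ htM hMn]
    have : ∑ x ∈ Ico M n, (M - x - 1) = 0 :=
      Finset.sum_eq_zero fun x hx => by rw [Finset.mem_Ico] at hx; omega
    omega
  have h3 : ∑ x ∈ Ico t M, (M - x - 1) = ∑ y ∈ range (M - t), ((M - t) - y - 1) := by
    rw [Finset.sum_Ico_eq_sum_range]
    exact Finset.sum_congr rfl fun y hy => by omega
  rw [hsplit, h2, h3, Nat.mul_add, sum_lemma1 t (le_trans htM hMn), sum_lemma2]

set_option maxHeartbeats 1000000 in
/-- Convexity endpoint bound. -/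
lemma convex_bound (k t : ℕ) (hk : 1 ≤ k) (hn : 2 * k ≤ n) (ht : t ≤ k - 1) :
    t * (2 * n - t - 1) + (2 * k - 1 - 2 * t) * (2 * k - 1 - 2 * t - 1)
      ≤ max ((2 * k - 1) * (2 * k - 2)) ((k - 1) * (2 * n - k)) := by
  obtain ⟨d, hd⟩ : ∃ d, k - 1 = t + d := ⟨k - 1 - t, by omega⟩
  obtain ⟨e, he⟩ : ∃ e, n = 2 * k + e := ⟨n - 2 * k, by omega⟩
  have hLHS : t * (2 * n - t - 1) + (2 * k - 1 - 2 * t) * (2 * k - 1 - 2 * t - 1)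
      = t * (3 * t + 4 * d + 3 + 2 * e) + (2 * d + 1) * (2 * d) := by
    have h1 : 2 * n - t - 1 = 3 * t + 4 * d + 3 + 2 * e := by omega
    have h2 : 2 * k - 1 - 2 * t = 2 * d + 1 := by omega
    have h3 : 2 * k - 1 - 2 * t - 1 = 2 * d := by omega
    rw [h1, h3, h2]
  have hA : (2 * k - 1) * (2 * k - 2) = (2 * t + 2 * d + 1) * (2 * t + 2 * d) := by
    have h1 : 2 * k - 1 = 2 * t + 2 * d + 1 := by omega
    have h2 : 2 * k - 2 = 2 * t + 2 * d := by omega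
    rw [h1, h2]
  have hB : (k - 1) * (2 * n - k) = (t + d) * (3 * t + 3 * d + 3 + 2 * e) := by
    have h1 : 2 * n - k = 3 * t + 3 * d + 3 + 2 * e := by omega
    rw [hd, h1]
  rw [hLHS, hA, hB]
  rcases le_total ((2 * t + 2 * d + 1) * (2 * t + 2 * d))
      ((t + d) * (3 * t + 3 * d + 3 + 2 * e)) with hc | hc
  · rw [max_eq_right hc]
    -- from hc : (t+d)^2 ≤ (1+2e)(t+d), so t+d ≤ 1+2e or t+d = 0
    rcases Nat.eq_zero_or_pos (t + d) with h0 | h0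
    · have ht0 : t = 0 := by omega
      have hd0 : d = 0 := by omega
      subst ht0; subst hd0
      refine le_trans (le_of_eq ?_) (Nat.zero_le _)
      ring
    · have hle : t + d ≤ 1 + 2 * e := by nlinarith
      nlinarith [mul_le_mul_right hle d]
  · rw [max_eq_left hc]
    rcases Nat.eq_zero_or_pos (t + d) with h0 | h0
    · have ht0 : t = 0 := by omega
      have hd0 : d = 0 := by omega
      subst ht0; subst hd0
      refine le_trans (le_of_eq ?_) (Nat.zero_le _)
      ring
    · have hge : 1 + 2 * e ≤ t + d := by nlinarith
      nlinarith [mul_le_mul_right hge t]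




/-- The map moving edge `{j,x}` to `{i,x}` when possible. -/
noncomputable def mv (i j : Fin n) (G : SimpleGraph (Fin n)) (e : Sym2 (Fin n)) :
    Sym2 (Fin n) :=
  if j ∈ e ∧ i ∉ e ∧ Sym2.map (fun v => if v = j then i else v) e ∉ G.edgeSet
  then Sym2.map (fun v => if v = j then i else v) e else e

/-- Compression of `G` at `(i,j)`. -/
noncomputable def comp (i j : Fin n) (G : SimpleGraph (Fin n)) : SimpleGraph (Fin n) :=
  SimpleGraph.fromEdgeSet (mv i j G '' G.edgeSet)

variable {G : SimpleGraph (Fin n)} {i j : Fin n}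

lemma mv_spec (hij : i ≠ j) {e : Sym2 (Fin n)} (he : e ∈ G.edgeSet) :
    mv i j G e = e ∨
    (∃ x, x ≠ i ∧ x ≠ j ∧ e = s(j, x) ∧ mv i j G e = s(i, x) ∧
      mv i j G e ∉ G.edgeSet) := by
  unfold mv
  split
  · rename_i h
    obtain ⟨hj, hi, hmap⟩ := h
    obtain ⟨x, rfl⟩ := Sym2.mem_iff_exists.1 hj
    right
    have hxj : x ≠ j := by
      rintro rfl
      exact (G.not_isDiag_of_mem_edgeSet he) (by simp)
    have hxi : x ≠ i := by
      rintro rfl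
      exact hi (Sym2.mem_mk_right j x)
    have hmapeq : Sym2.map (fun v => if v = j then i else v) s(j, x) = s(i, x) := by
      simp [Sym2.map_pair_eq, if_neg hxj]
    exact ⟨x, hxi, hxj, rfl, hmapeq, hmap⟩
  · left; rfl

lemma mv_fix_of_mem_i (hie : i ∈ e) : mv i j G e = e := by
  unfold mv
  rw [if_neg]
  rintro ⟨-, hi, -⟩
  exact hi hie

lemma mv_fix_of_not_mem_j (hje : j ∉ e) : mv i j G e = e := by
  unfold mv
  rw [if_neg]
  rintro ⟨hj, -, -⟩
  exact hje hj

lemma mv_mem_iff (hij : i ≠ j) (f : Sym2 (Fin n)) :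
    f ∈ mv i j G '' G.edgeSet ↔
      (f ∈ G.edgeSet ∧ mv i j G f = f) ∨
      (∃ x, x ≠ i ∧ x ≠ j ∧ f = s(i, x) ∧ s(j, x) ∈ G.edgeSet ∧
        s(i, x) ∉ G.edgeSet) := by
  constructor
  · rintro ⟨e, he, rfl⟩
    rcases mv_spec hij he with h | ⟨x, hxi, hxj, rfl, hmv, hnm⟩
    · left; rw [h]; exact ⟨he, by rw [h]⟩
    · right
      exact ⟨x, hxi, hxj, hmv, he, by rwa [hmv] at hnm⟩
  · rintro (⟨hf, hfix⟩ | ⟨x, hxi, hxj, rfl, hjx, hnix⟩)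
    · exact ⟨f, hf, hfix⟩
    · refine ⟨s(j, x), hjx, ?_⟩
      unfold mv
      have hmapeq : Sym2.map (fun v => if v = j then i else v) s(j, x) = s(i, x) := by
        simp [Sym2.map_pair_eq, if_neg hxj]
      rw [if_pos]
      · exact hmapeq
      · refine ⟨Sym2.mem_mk_left j x, ?_, ?_⟩
        · rw [Sym2.mem_iff]
          rintro (rfl | rfl)
          · exact hij rfl
          · exact hxi rfl
        · rw [hmapeq]; exact hnix

lemma comp_edgeSet (hij : i ≠ j) : (comp i j G).edgeSet = mv i j G '' G.edgeSet := by
  rw [comp, SimpleGraph.edgeSet_fromEdgeSet]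
  rw [sdiff_eq_left.2]
  rw [Set.disjoint_left]
  rintro e hmem hdiag
  obtain ⟨e', he', rfl⟩ := hmem
  rcases mv_spec hij he' with h | ⟨x, hxi, hxj, -, hmv, -⟩
  · rw [h] at hdiag
    exact G.not_isDiag_of_mem_edgeSet he' hdiag
  · rw [hmv] at hdiag
    have : (s(i, x) : Sym2 (Fin n)).IsDiag := hdiag
    rw [Sym2.mk_isDiag_iff] at this
    exact hxi this.symm

lemma comp_adj_iff (hij : i ≠ j) {a b : Fin n} :
    (comp i j G).Adj a b ↔ a ≠ b ∧ s(a, b) ∈ mv i j G '' G.edgeSet := by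
  rw [← SimpleGraph.mem_edgeSet, comp_edgeSet hij]
  constructor
  · intro h
    have hab : a ≠ b := by
      rintro rfl
      rcases (mv_mem_iff hij _).1 h with ⟨hmem, -⟩ | ⟨x, hxi, -, heq, -, -⟩
      · exact G.not_isDiag_of_mem_edgeSet hmem (by simp)
      · rw [Sym2.eq_iff] at heq
        rcases heq with ⟨h1, h2⟩ | ⟨h1, h2⟩
        · exact hxi (h2.symm.trans h1)
        · exact hxi (h1.symm.trans h2)
    exact ⟨hab, h⟩
  · rintro ⟨-, h⟩; exact h

lemma comp_adj_other (hij : i ≠ j) {a b : Fin n} (hai : a ≠ i) (haj : a ≠ j)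
    (hbi : b ≠ i) (hbj : b ≠ j) : (comp i j G).Adj a b ↔ G.Adj a b := by
  by_cases hab : a = b
  · subst hab; simp
  rw [comp_adj_iff hij, mv_mem_iff hij]
  constructor
  · rintro ⟨-, ⟨hmem, -⟩ | ⟨x, hxi, hxj, heq, -, -⟩⟩
    · exact hmem
    · exfalso
      rw [Sym2.eq_iff] at heq
      rcases heq with ⟨rfl, rfl⟩ | ⟨rfl, rfl⟩
      · exact hai rfl
      · exact hbi rfl
  · intro h
    refine ⟨hab, Or.inl ⟨h, ?_⟩⟩
    apply mv_fix_of_not_mem_j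
    rw [Sym2.mem_iff]
    rintro (rfl | rfl)
    · exact haj rfl
    · exact hbj rfl

lemma comp_adj_ij (hij : i ≠ j) : (comp i j G).Adj i j ↔ G.Adj i j := by
  rw [comp_adj_iff hij, mv_mem_iff hij]
  constructor
  · rintro ⟨-, ⟨hmem, -⟩ | ⟨x, hxi, hxj, heq, -, -⟩⟩
    · exact hmem
    · exfalso
      rw [Sym2.eq_iff] at heq
      rcases heq with ⟨-, rfl⟩ | ⟨rfl, -⟩
      · exact hxj rfl
      · exact hxi rfl
  · intro h
    exact ⟨hij, Or.inl ⟨h, mv_fix_of_mem_i (Sym2.mem_mk_left i j)⟩⟩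

lemma comp_adj_j (hij : i ≠ j) {x : Fin n} (hxi : x ≠ i) (hxj : x ≠ j) :
    (comp i j G).Adj j x ↔ G.Adj j x ∧ G.Adj i x := by
  rw [comp_adj_iff hij, mv_mem_iff hij]
  constructor
  · rintro ⟨-, ⟨hmem, hfix⟩ | ⟨y, hyi, hyj, heq, -, -⟩⟩
    · refine ⟨hmem, ?_⟩
      by_contra hnix
      unfold mv at hfix
      rw [if_pos] at hfix
      · -- map s(j,x) = s(i,x) = s(j,x) : contradiction
        have hmapeq : Sym2.map (fun v => if v = j then i else v) s(j, x) = s(i, x) := by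
          simp [Sym2.map_pair_eq, if_neg hxj]
        rw [hmapeq] at hfix
        rw [Sym2.eq_iff] at hfix
        rcases hfix with ⟨h1, -⟩ | ⟨h1, h2⟩
        · exact hij h1
        · exact hxi h1.symm
      · have hmapeq : Sym2.map (fun v => if v = j then i else v) s(j, x) = s(i, x) := by
          simp [Sym2.map_pair_eq, if_neg hxj]
        refine ⟨Sym2.mem_mk_left j x, ?_, ?_⟩
        · rw [Sym2.mem_iff]
          rintro (rfl | rfl)
          · exact hij rfl
          · exact hxi rfl
        · rw [hmapeq]
          exact fun h => hnix (G.mem_edgeSet.1 h)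
    · exfalso
      rw [Sym2.eq_iff] at heq
      rcases heq with ⟨h1, -⟩ | ⟨-, h2⟩
      · exact hij h1.symm
      · exact hxi h2
  · rintro ⟨hjx, hix⟩
    refine ⟨fun h => hxj h.symm, Or.inl ⟨hjx, ?_⟩⟩
    unfold mv
    rw [if_neg]
    rintro ⟨-, -, hmap⟩
    have hmapeq : Sym2.map (fun v => if v = j then i else v) s(j, x) = s(i, x) := by
      simp [Sym2.map_pair_eq, if_neg hxj]
    rw [hmapeq] at hmap
    exact hmap hix

lemma comp_adj_i (hij : i ≠ j) {x : Fin n} (hxi : x ≠ i) (hxj : x ≠ j) :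
    (comp i j G).Adj i x ↔ G.Adj i x ∨ G.Adj j x := by
  rw [comp_adj_iff hij, mv_mem_iff hij]
  constructor
  · rintro ⟨-, ⟨hmem, -⟩ | ⟨y, hyi, hyj, heq, hjy, -⟩⟩
    · exact Or.inl hmem
    · rw [Sym2.eq_iff] at heq
      rcases heq with ⟨-, rfl⟩ | ⟨rfl, rfl⟩
      · exact Or.inr hjy
      · exact absurd rfl hyi
  · rintro (h | h)
    · exact ⟨fun he => hxi he.symm,
        Or.inl ⟨h, mv_fix_of_mem_i (Sym2.mem_mk_left i x)⟩⟩
    · by_cases hix : G.Adj i x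
      · exact ⟨fun he => hxi he.symm,
          Or.inl ⟨hix, mv_fix_of_mem_i (Sym2.mem_mk_left i x)⟩⟩
      · exact ⟨fun he => hxi he.symm, Or.inr ⟨x, hxi, hxj, rfl, h, hix⟩⟩

lemma comp_adj_of_ne_i (hij : i ≠ j) {a b : Fin n} (hai : a ≠ i) (hbi : b ≠ i)
    (h : (comp i j G).Adj a b) : G.Adj a b := by
  rcases (comp_adj_iff hij).1 h with ⟨-, hm⟩
  rcases (mv_mem_iff hij _).1 hm with ⟨hmem, -⟩ | ⟨x, hxi, hxj, heq, -, -⟩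
  · exact G.mem_edgeSet.1 hmem
  · exfalso
    rw [Sym2.eq_iff] at heq
    rcases heq with ⟨h1, -⟩ | ⟨-, h2⟩
    · exact hai h1
    · exact hbi h2






/-- Weight of an edge: sum of vertex indices. -/
noncomputable def wt : Sym2 (Fin n) → ℕ :=
  Sym2.lift ⟨fun a b => a.val + b.val, fun a b => by ring⟩

lemma wt_mk (a b : Fin n) : wt s(a, b) = a.val + b.val := rfl

lemma EF_comp (hij : i ≠ j) : EF (comp i j G) = (EF G).image (mv i j G) := by
  ext e
  simp only [mem_EF, comp_edgeSet hij, Finset.mem_image, Set.mem_image]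

lemma mv_injOn (hij : i ≠ j) :
    ∀ e₁ ∈ EF G, ∀ e₂ ∈ EF G, mv i j G e₁ = mv i j G e₂ → e₁ = e₂ := by
  intro e₁ h₁ e₂ h₂ h
  rcases mv_spec hij (mem_EF.1 h₁) with f₁ | ⟨x, hxi, hxj, he₁, hm₁, hn₁⟩ <;>
    rcases mv_spec hij (mem_EF.1 h₂) with f₂ | ⟨y, hyi, hyj, he₂, hm₂, hn₂⟩
  · rw [f₁, f₂] at h; exact h
  · exfalso
    rw [f₁] at h
    rw [← h] at hn₂
    exact hn₂ (mem_EF.1 h₁)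
  · exfalso
    rw [f₂] at h
    rw [h] at hn₁
    exact hn₁ (mem_EF.1 h₂)
  · rw [hm₁, hm₂, Sym2.eq_iff] at h
    rcases h with ⟨-, h2⟩ | ⟨h1, -⟩
    · rw [he₁, he₂, h2]
    · exact absurd h1.symm hyi

lemma card_comp (hij : i ≠ j) : (EF (comp i j G)).card = (EF G).card := by
  rw [EF_comp hij]
  exact Finset.card_image_of_injOn fun e he e' he' => mv_injOn hij e he e' he'

noncomputable def Phi (G : SimpleGraph (Fin n)) : ℕ := ∑ e ∈ EF G, wt e

lemma Phi_comp_lt (hij : i < j) (hwit : ∃ e ∈ EF G, mv i j G e ≠ e) :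
    Phi (comp i j G) < Phi G := by
  have hij' : i ≠ j := ne_of_lt hij
  rw [Phi, EF_comp hij', Finset.sum_image (fun e he e' he' => mv_injOn hij' e he e' he')]
  refine Finset.sum_lt_sum (fun e he => ?_) ?_
  · rcases mv_spec hij' (mem_EF.1 he) with h | ⟨x, hxi, hxj, he₁, hm₁, -⟩
    · rw [h]
    · rw [hm₁, he₁, wt_mk, wt_mk]
      have := hij.le
      omega
  · obtain ⟨e, he, hne⟩ := hwit
    refine ⟨e, he, ?_⟩
    rcases mv_spec hij' (mem_EF.1 he) with h | ⟨x, hxi, hxj, he₁, hm₁, -⟩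
    · exact absurd h hne
    · rw [hm₁, he₁, wt_mk, wt_mk]
      have : i.val < j.val := hij
      omega

lemma fin2_succ_ne (e : Fin 2) : e + 1 ≠ e := by fin_cases e <;> decide

lemma fin2_cases (a b : Fin 2) : a = b ∨ a = b + 1 := by fin_cases a <;> fin_cases b <;> simp

/-- reorientation helper -/
lemma pair_adj {V : Type*} {k : ℕ} (H : SimpleGraph V) (g : Fin k × Fin 2 → V)
    (c : Fin k) (e : Fin 2) (h : H.Adj (g (c, e)) (g (c, e + 1))) :
    H.Adj (g (c, 0)) (g (c, 1)) := by
  fin_cases e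
  · exact h
  · exact h.symm

lemma adj_pairs {V : Type*} {k : ℕ} {H : SimpleGraph V} {g : Fin k × Fin 2 → V}
    (h : ∀ c : Fin k, H.Adj (g (c, 0)) (g (c, 1))) (c : Fin k) (e : Fin 2) :
    H.Adj (g (c, e)) (g (c, e + 1)) := by
  fin_cases e
  · exact h c
  · exact (h c).symm

lemma hasM_comp (hij : i < j) {k : ℕ} (h : HasM (comp i j G) k) : HasM G k := by
  have hij' : i ≠ j := ne_of_lt hij
  obtain ⟨f, hinj, hadj⟩ := h
  by_cases hcov : ∃ p, f p = i
  case neg =>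
    refine ⟨f, hinj, fun c => comp_adj_of_ne_i hij' ?_ ?_ (hadj c)⟩
    · exact fun h' => hcov ⟨_, h'⟩
    · exact fun h' => hcov ⟨_, h'⟩
  obtain ⟨⟨c, e0⟩, hp⟩ := hcov
  have hCix : (comp i j G).Adj i (f (c, e0 + 1)) := by
    have := adj_pairs hadj c e0
    rwa [hp] at this
  set x := f (c, e0 + 1) with hxdef
  have hxi : x ≠ i := (comp i j G).ne_of_adj hCix.symm
  by_cases hxj : x = j
  · -- edge {i,j} in the matching
    refine ⟨f, hinj, fun c' => ?_⟩
    by_cases hcc : c' = c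
    · subst hcc
      refine pair_adj G f c' e0 ?_
      rw [hp, ← hxdef, hxj]
      exact (comp_adj_ij hij').1 (hxj ▸ hCix)
    · refine comp_adj_of_ne_i hij' ?_ ?_ (hadj c')
      · intro h'
        have := hinj (h'.trans hp.symm)
        rw [Prod.ext_iff] at this
        exact hcc this.1
      · intro h'
        have := hinj (h'.trans hp.symm)
        rw [Prod.ext_iff] at this
        exact hcc this.1
  · have hCix' := (comp_adj_i hij' hxi hxj).1 hCix
    by_cases hGix : G.Adj i x
    · refine ⟨f, hinj, fun c' => ?_⟩
      by_cases hcc : c' = c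
      · subst hcc
        refine pair_adj G f c' e0 ?_
        rw [hp, ← hxdef]
        exact hGix
      · refine comp_adj_of_ne_i hij' ?_ ?_ (hadj c')
        · intro h'
          have := hinj (h'.trans hp.symm)
          rw [Prod.ext_iff] at this
          exact hcc this.1
        · intro h'
          have := hinj (h'.trans hp.symm)
          rw [Prod.ext_iff] at this
          exact hcc this.1
    · have hGjx : G.Adj j x := hCix'.resolve_left hGix
      by_cases hjcov : ∃ p, f p = j
      · -- j is covered by the matching: swap
        obtain ⟨⟨d, e1⟩, hq⟩ := hjcov
        have hdc : d ≠ c := by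
          intro hdc
          subst hdc
          rcases fin2_cases e1 e0 with h1 | h1
          · subst h1
            exact hij' ((hp.symm.trans hq).symm ▸ rfl : i = j)
          · subst h1
            exact hxj (hxdef ▸ hq)
        set y := f (d, e1 + 1) with hydef
        have hCjy : (comp i j G).Adj j y := by
          have := adj_pairs hadj d e1
          rwa [hq] at this
        have hyj : y ≠ j := (comp i j G).ne_of_adj hCjy.symm
        have hyi : y ≠ i := by
          intro h'
          have := hinj ((hydef.symm.trans h').trans hp.symm)
          rw [Prod.ext_iff] at this
          exact hdc this.1
        obtain ⟨hGjy, hGiy⟩ := (comp_adj_j hij' hyi hyj).1 hCjy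
        classical
        set σ := Equiv.swap ((c, e0 + 1) : Fin k × Fin 2) (d, e1 + 1) with hσ
        refine ⟨f ∘ σ, hinj.comp σ.injective, fun c' => ?_⟩
        by_cases hcc : c' = c
        · subst hcc
          refine pair_adj G (f ∘ σ) c' e0 ?_
          have h1 : (f ∘ σ) (c', e0) = i := by
            rw [Function.comp_apply, hσ, Equiv.swap_apply_of_ne_of_ne, hp]
            · exact fun h' => fin2_succ_ne e0 (Prod.ext_iff.1 h').2.symm
            · exact fun h' => hdc (Prod.ext_iff.1 h').1.symm
          have h2 : (f ∘ σ) (c', e0 + 1) = y := by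
            rw [Function.comp_apply, hσ, Equiv.swap_apply_left, hydef]
          rw [h1, h2]
          exact hGiy
        · by_cases hdd : c' = d
          · subst hdd
            refine pair_adj G (f ∘ σ) c' e1 ?_
            have h1 : (f ∘ σ) (c', e1) = j := by
              rw [Function.comp_apply, hσ, Equiv.swap_apply_of_ne_of_ne, hq]
              · exact fun h' => hdc (Prod.ext_iff.1 h').1
              · exact fun h' => fin2_succ_ne e1 (Prod.ext_iff.1 h').2.symm
            have h2 : (f ∘ σ) (c', e1 + 1) = x := by
              rw [Function.comp_apply, hσ, Equiv.swap_apply_right, hxdef]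
            rw [h1, h2]
            exact hGjx
          · have hfix : ∀ e : Fin 2, (f ∘ σ) (c', e) = f (c', e) := by
              intro e
              rw [Function.comp_apply, hσ, Equiv.swap_apply_of_ne_of_ne]
              · exact fun h' => hcc (Prod.ext_iff.1 h').1
              · exact fun h' => hdd (Prod.ext_iff.1 h').1
            rw [show ((c', 0) : Fin k × Fin 2) = (c', (0 : Fin 2)) from rfl]
            rw [hfix 0, hfix 1]
            refine comp_adj_of_ne_i hij' ?_ ?_ (hadj c')
            · intro h'
              have := hinj (h'.trans hp.symm)
              rw [Prod.ext_iff] at this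
              exact hcc this.1
            · intro h'
              have := hinj (h'.trans hp.symm)
              rw [Prod.ext_iff] at this
              exact hcc this.1
      · -- j uncovered : update
        classical
        set f' := Function.update f (c, e0) j with hf'
        have hinj' : Function.Injective f' := by
          intro a b hab
          rcases eq_or_ne a (c, e0) with rfl | ha
          · rcases eq_or_ne b (c, e0) with rfl | hb
            · rfl
            · rw [hf', Function.update_self, Function.update_of_ne hb] at hab
              exact absurd ⟨b, hab.symm⟩ hjcov
          · rcases eq_or_ne b (c, e0) with rfl | hb
            · rw [hf', Function.update_self, Function.update_of_ne ha] at hab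
              exact absurd ⟨a, hab⟩ hjcov
            · rw [hf', Function.update_of_ne ha, Function.update_of_ne hb] at hab
              exact hinj hab
        refine ⟨f', hinj', fun c' => ?_⟩
        by_cases hcc : c' = c
        · subst hcc
          refine pair_adj G f' c' e0 ?_
          have h1 : f' (c', e0) = j := by rw [hf', Function.update_self]
          have h2 : f' (c', e0 + 1) = x := by
            rw [hf', Function.update_of_ne, hxdef]
            exact fun h' => fin2_succ_ne e0 (Prod.ext_iff.1 h').2
          rw [h1, h2]
          exact hGjx
        · have hfix : ∀ e : Fin 2, f' (c', e) = f (c', e) := by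
            intro e
            rw [hf', Function.update_of_ne]
            exact fun h' => hcc (Prod.ext_iff.1 h').1
          rw [hfix 0, hfix 1]
          refine comp_adj_of_ne_i hij' ?_ ?_ (hadj c')
          · intro h'
            have := hinj (h'.trans hp.symm)
            rw [Prod.ext_iff] at this
            exact hcc this.1
          · intro h'
            have := hinj (h'.trans hp.symm)
            rw [Prod.ext_iff] at this
            exact hcc this.1



/-! ### Shifted graphs -/

def Shifted (G : SimpleGraph (Fin n)) : Prop :=
  ∀ ⦃a b c : Fin n⦄, G.Adj a b → c < b → c ≠ a → G.Adj a c

lemma shifted_bound {k : ℕ} (hk : 1 ≤ k) (hn : 2 * k ≤ n) {G : SimpleGraph (Fin n)}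
    (hG : Shifted G) (hm : ¬ HasM G k) :
    2 * (pairs G).card ≤ max ((2*k-1)*(2*k-2)) ((k-1)*(2*n-k)) := by
  by_cases hall : ∀ i : Fin k,
      G.Adj ⟨i.val, by omega⟩ ⟨2*k-1-i.val, by omega⟩
  · exfalso
    apply hm
    refine ⟨fun p => if p.2 = 0 then ⟨p.1.val, by omega⟩ else ⟨2*k-1-p.1.val, by omega⟩,
      ?_, ?_⟩
    · rintro ⟨a, e⟩ ⟨b, e'⟩ h
      have ha := a.isLt
      have hb := b.isLt
      have hval := congrArg Fin.val h
      fin_cases e <;> fin_cases e' <;>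
        simp [Prod.ext_iff, Fin.ext_iff] at hval ⊢ <;> omega
    · intro i
      simpa using hall i
  · push_neg at hall
    obtain ⟨t', ht'⟩ := hall
    set t := t'.val with htdef
    have htk : t ≤ k - 1 := by have := t'.isLt; omega
    have hstruct : ∀ a b : Fin n, G.Adj a b → a < b →
        (a.val < t ∨ b.val < 2*k-1-t) := by
      intro a b hadj hab
      by_contra hcon
      push_neg at hcon
      obtain ⟨hta, htb⟩ := hcon
      set T : Fin n := ⟨t, by omega⟩ with hT
      set W : Fin n := ⟨2*k-1-t, by omega⟩ with hW
      have htW : ¬ G.Adj T W := ht'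
      have hTW : (T : Fin n) ≠ W := by
        rw [Fin.ne_iff_vne]; simp [hT, hW]; omega
      by_cases hbW : b = W
      · -- a ≠ W since a < b = W; lower a to T
        by_cases haT : a = T
        · exact htW (haT ▸ hbW ▸ hadj)
        · have hTa : T < a := by
            rw [Fin.lt_iff_val_lt_val]
            have : T.val ≤ a.val := hta
            have : T.val ≠ a.val := fun h => haT (Fin.ext h.symm)
            omega
          have := hG (hbW ▸ hadj).symm hTa hTW
          exact htW this.symm
      · have hWb : W < b := by
          rw [Fin.lt_iff_val_lt_val]
          have : W.val ≠ b.val := fun h => hbW (Fin.ext h.symm)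
          simp only [hW] at *
          omega
        by_cases haW : a = W
        · -- Adj W b ; lower b to T
          have hTb : T < b := lt_trans (by rw [Fin.lt_iff_val_lt_val]; simp [hT, hW]; omega) hWb
          have hTa' : T ≠ a := fun h => hTW (h.symm ▸ haW)
          have := hG hadj hTb hTa'
          exact htW (haW ▸ this).symm
        · have hWa : W ≠ a := fun h => haW h.symm
          have hAW : G.Adj a W := hG hadj hWb hWa
          by_cases haT : a = T
          · exact htW (haT ▸ hAW)
          · have hTa : T < a := by
              rw [Fin.lt_iff_val_lt_val]
              have h1 : T.val ≤ a.val := hta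
              have h2 : T.val ≠ a.val := fun h => haT (Fin.ext h.symm)
              omega
            have := hG hAW.symm hTa hTW
            exact htW this.symm
    have hsub : pairs G ⊆ univ.filter
        (fun p : Fin n × Fin n => p.1 < p.2 ∧ (p.1.val < t ∨ p.2.val < 2*k-1-t)) := by
      intro p hp
      simp only [pairs, mem_filter, mem_univ, true_and] at hp ⊢
      exact ⟨hp.2, hstruct p.1 p.2 hp.1 hp.2⟩
    have hcard := Finset.card_le_card hsub
    have hQ := cardQ (n := n) t (2*k-1-t) (by omega) (by omega)
    have heq : 2*k-1-t-t = 2*k-1-2*t := by omega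
    rw [heq] at hQ
    calc 2 * (pairs G).card ≤ 2 * (univ.filter
        (fun p : Fin n × Fin n => p.1 < p.2 ∧ (p.1.val < t ∨ p.2.val < 2*k-1-t))).card := by omega
      _ = t * (2 * n - t - 1) + (2*k-1-2*t) * (2*k-1-2*t - 1) := hQ
      _ ≤ max ((2*k-1)*(2*k-2)) ((k-1)*(2*n-k)) := convex_bound k t hk hn htk

/-! ### Main upper bound -/

lemma upper_bound_aux {k : ℕ} (hk : 1 ≤ k) (hn : 2 * k ≤ n) :
    ∀ N (G : SimpleGraph (Fin n)), Phi G ≤ N → ¬ HasM G k →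
      2 * (pairs G).card ≤ max ((2*k-1)*(2*k-2)) ((k-1)*(2*n-k)) := by
  intro N
  induction N using Nat.strong_induction_on with
  | _ N ih =>
    intro G hPhi hm
    by_cases hsh : Shifted G
    · exact shifted_bound hk hn hsh hm
    · simp only [Shifted, not_forall] at hsh
      obtain ⟨a, b, c, hadj, hcb, hca, hnadj⟩ := hsh
      have hab : a ≠ b := G.ne_of_adj hadj
      have hmoves : mv c b G s(a, b) = s(a, c) := by
        unfold mv
        have hmapeq : Sym2.map (fun v => if v = b then c else v) s(a, b) = s(a, c) := by
          simp [Sym2.map_pair_eq, if_neg hab]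
        rw [if_pos]
        · exact hmapeq
        · refine ⟨Sym2.mem_mk_right a b, ?_, ?_⟩
          · rw [Sym2.mem_iff]
            rintro (h | h)
            · exact hca h
            · exact absurd h (ne_of_lt hcb)
          · rw [hmapeq]
            exact fun hmem => hnadj (G.mem_edgeSet.1 hmem)
      have hwit : ∃ e ∈ EF G, mv c b G e ≠ e := by
        refine ⟨s(a, b), mem_EF.2 (G.mem_edgeSet.2 hadj), ?_⟩
        rw [hmoves]
        intro h
        rw [Sym2.eq_iff] at h
        rcases h with ⟨-, h2⟩ | ⟨-, h2⟩
        · exact (ne_of_lt hcb) h2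
        · exact hca h2
      have hlt := Phi_comp_lt hcb hwit
      have hcb' : c ≠ b := ne_of_lt hcb
      have hcount : (pairs (comp c b G)).card = (pairs G).card := by
        have h1 := pairs_card (comp c b G)
        have h2 := pairs_card G
        have h3 := EF_card (comp c b G)
        have h4 := EF_card G
        have h5 := card_comp (G := G) hcb'
        omega
      have := ih (Phi (comp c b G)) (by omega) (comp c b G) le_rfl
        (fun hM => hm (hasM_comp hcb hM))
      omega


/-! ### Arithmetic helpers -/

lemma two_mul_choose_two (m : ℕ) : 2 * m.choose 2 = m * (m - 1) := by
  rcases m with _ | s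
  · simp
  · rw [Nat.choose_two_right, Nat.mul_div_cancel']
    have : Even (s * (s + 1)) := Nat.even_mul_succ_self s
    have h2 : (s + 1) * s = s * (s + 1) := Nat.mul_comm _ _
    rw [Nat.succ_sub_one, h2]
    exact this.two_dvd

lemma twoB (k : ℕ) (hk : 1 ≤ k) (hkn : k ≤ n) :
    2 * ((k-1).choose 2 + (k-1)*(n-k+1)) = (k-1)*(2*n-k) := by
  obtain ⟨m, rfl⟩ : ∃ m, k = m + 1 := ⟨k-1, by omega⟩
  simp only [Nat.add_sub_cancel]
  have h0 : n - (m+1) + 1 = n - m := by omega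
  rw [h0, Nat.mul_add, two_mul_choose_two]
  rcases Nat.eq_zero_or_pos m with rfl | hm
  · simp
  · have hinner : 2 * (m * (n - m)) = m * (2*(n-m)) := by ring
    rw [hinner, ← Nat.mul_add]
    congr 1
    omega

/-! ### Extremal examples -/

def exA (n k : ℕ) : SimpleGraph (Fin n) :=
  SimpleGraph.fromRel (fun a b => a.val < 2*k-1 ∧ b.val < 2*k-1)

def exB (n k : ℕ) : SimpleGraph (Fin n) :=
  SimpleGraph.fromRel (fun a b => a.val < k - 1)

lemma exA_no (k : ℕ) (hk : 1 ≤ k) : ¬ HasM (exA n k) k := by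
  rintro ⟨f, hinj, hadj⟩
  have hsmall : ∀ p, (f p).val < 2*k-1 := by
    rintro ⟨i, e⟩
    have hthis := hadj i
    rw [exA, SimpleGraph.fromRel_adj] at hthis
    have h2 : (f (i,0)).val < 2*k-1 ∧ (f (i,1)).val < 2*k-1 := by tauto
    fin_cases e
    · exact h2.1
    · exact h2.2
  have hcard := Fintype.card_le_of_injective
      (fun p => (⟨(f p).val, hsmall p⟩ : Fin (2*k-1)))
      (fun p q h => hinj (Fin.ext (congrArg Fin.val h : _)))
  simp only [Fintype.card_prod, Fintype.card_fin] at hcard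
  omega

lemma exA_count (k : ℕ) (hk : 1 ≤ k) (hn : 2*k ≤ n) :
    edgeCount (exA n k) = (2*k-1).choose 2 := by
  rw [pairs_card]
  have hset : pairs (exA n k) = univ.filter
      (fun p : Fin n × Fin n => p.1 < p.2 ∧ (p.1.val < 0 ∨ p.2.val < 2*k-1)) := by
    ext ⟨a, b⟩
    simp only [pairs, exA, mem_filter, mem_univ, true_and, SimpleGraph.fromRel_adj]
    constructor
    · rintro ⟨⟨hne, hcond⟩, hlt⟩
      refine ⟨hlt, Or.inr ?_⟩
      tauto
    · rintro ⟨hlt, h0 | hb⟩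
      · omega
      · have hab : a.val < b.val := hlt
        exact ⟨⟨ne_of_lt hlt, Or.inl ⟨by omega, hb⟩⟩, hlt⟩
  rw [hset]
  have hQ := cardQ (n := n) 0 (2*k-1) (by omega) (by omega)
  have hA2 := two_mul_choose_two (2*k-1)
  have e1 : 2*k-1-0 = 2*k-1 := by omega
  rw [e1] at hQ
  rw [← hA2] at hQ
  simp only [Nat.zero_mul, Nat.zero_add] at hQ
  omega

lemma exB_no (k : ℕ) (hk : 1 ≤ k) : ¬ HasM (exB n k) k := by
  rintro ⟨f, hinj, hadj⟩
  have hchoice : ∀ i : Fin k, ∃ e : Fin 2, (f (i, e)).val < k - 1 := by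
    intro i
    have hthis := hadj i
    rw [exB, SimpleGraph.fromRel_adj] at hthis
    rcases hthis.2 with h | h
    · exact ⟨0, h⟩
    · exact ⟨1, h⟩
  choose ge hge using hchoice
  have hcard := Fintype.card_le_of_injective
      (fun i : Fin k => (⟨(f (i, ge i)).val, hge i⟩ : Fin (k-1)))
      (fun i j h => by
        have h2 : f (i, ge i) = f (j, ge j) := Fin.ext (congrArg Fin.val h : _)
        exact (Prod.ext_iff.1 (hinj h2)).1)
  simp only [Fintype.card_fin] at hcard
  omega

lemma exB_count (k : ℕ) (hk : 1 ≤ k) (hn : 2*k ≤ n) :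
    edgeCount (exB n k) = (k-1).choose 2 + (k-1)*(n-k+1) := by
  rw [pairs_card]
  have hset : pairs (exB n k) = univ.filter
      (fun p : Fin n × Fin n => p.1 < p.2 ∧ (p.1.val < k-1 ∨ p.2.val < k-1)) := by
    ext ⟨a, b⟩
    simp only [pairs, exB, mem_filter, mem_univ, true_and, SimpleGraph.fromRel_adj]
    constructor
    · rintro ⟨⟨hne, hc⟩, hlt⟩
      exact ⟨hlt, hc⟩
    · rintro ⟨hlt, hc⟩
      exact ⟨⟨ne_of_lt hlt, hc⟩, hlt⟩
  rw [hset]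
  have hQ := cardQ (n := n) (k-1) (k-1) le_rfl (by omega)
  have hB := twoB (n := n) k hk (by omega)
  have h1 : (k-1) - (k-1) = 0 := by omega
  rw [h1] at hQ
  simp only [Nat.zero_mul] at hQ
  have h2 : 2*n - (k-1) - 1 = 2*n - k := by omega
  rw [h2] at hQ
  rw [← hB] at hQ
  omega

/-! ### max comparisons -/

lemma kfact (k : ℕ) (hk : 1 ≤ k) : (k-1)*(4*k-2) = (2*k-1)*(2*k-2) := by
  obtain ⟨m, rfl⟩ : ∃ m, k = m+1 := ⟨k-1, by omega⟩
  simp only [Nat.add_sub_cancel]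
  have e1 : 4*(m+1)-2 = 4*m+2 := by omega
  have e2 : 2*(m+1)-1 = 2*m+1 := by omega
  have e3 : 2*(m+1)-2 = 2*m := by omega
  rw [e1, e2, e3]
  ring

end EG

theorem stmt3 (n k : ℕ) (hk : 1 ≤ k) (hn : 2 * k ≤ n) :
    (2 * n < 5 * k - 2 →
      IsExtremalNumber n (cliquesUnion k 2) ((2 * k - 1).choose 2)) ∧
    (5 * k - 2 ≤ 2 * n →
      IsExtremalNumber n (cliquesUnion k 2)
        ((k - 1).choose 2 + (k - 1) * (n - k + 1))) := by
  have hA2 := two_mul_choose_two (2*k-1)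
  have h22 : 2*k-1-1 = 2*k-2 := by omega
  rw [h22] at hA2
  have hB2 := twoB (n := n) k hk (by omega)
  constructor
  · intro hreg
    have hBA : (k-1)*(2*n-k) ≤ (2*k-1)*(2*k-2) :=
      calc (k-1)*(2*n-k) ≤ (k-1)*(4*k-2) := Nat.mul_le_mul_left _ (by omega)
        _ = (2*k-1)*(2*k-2) := kfact k hk
    refine ⟨fun G hnc => ?_, ⟨exA n k,
      fun hc => exA_no k hk ((contains_iff _ _).1 hc), exA_count k hk hn⟩⟩
    rw [contains_iff] at hnc
    have hub := upper_bound_aux hk hn (Phi G) G le_rfl hnc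
    rw [max_eq_left hBA, ← hA2] at hub
    rw [pairs_card]
    omega
  · intro hreg
    have hAB : (2*k-1)*(2*k-2) ≤ (k-1)*(2*n-k) :=
      calc (2*k-1)*(2*k-2) = (k-1)*(4*k-2) := (kfact k hk).symm
        _ ≤ (k-1)*(2*n-k) := Nat.mul_le_mul_left _ (by omega)
    refine ⟨fun G hnc => ?_, ⟨exB n k,
      fun hc => exB_no k hk ((contains_iff _ _).1 hc), exB_count k hk hn⟩⟩
    rw [contains_iff] at hnc
    have hub := upper_bound_aux hk hn (Phi G) G le_rfl hnc
    rw [max_eq_right hAB, ← hB2] at hub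
    rw [pairs_card]
    omega
end

section
/- For p ≥ 3 and k ≥ 1, the maximum number of edges of a graph on exactly kp vertices containing no k vertex-disjoint copies of K_p equals C(kp,2) - C(k+1,2) if k ≤ 2p-2, and equals C(kp,2) - (kp - p + 1) if k ≥ 2p-1. -/
open SimpleGraph Finset

namespace KP
set_option linter.unusedSectionVars false


variable {V : Type*} [DecidableEq V]

/-- number of `r`-neighbours of `v` inside `A` -/
def dd (r : V → V → Prop) [DecidableRel r] (A : Finset V) (v : V) : ℕ :=
  (A.filter (r v)).card

/-- twice the number of `r`-edges inside `A` -/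
def EE (r : V → V → Prop) [DecidableRel r] (A : Finset V) : ℕ :=
  ∑ v ∈ A, dd r A v

def Ind (r : V → V → Prop) (S : Finset V) : Prop := ∀ x ∈ S, ∀ y ∈ S, ¬ r x y

variable {r : V → V → Prop} [DecidableRel r]

lemma Ind.mono {S T : Finset V} (h : T ⊆ S) (hS : Ind r S) : Ind r T :=
  fun x hx y hy => hS x (h hx) y (h hy)

lemma dd_mono {A B : Finset V} (h : A ⊆ B) (v : V) : dd r A v ≤ dd r B v :=
  Finset.card_le_card (Finset.filter_subset_filter _ h)

omit [DecidableEq V] in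
lemma dd_eq_sum (A : Finset V) (v : V) : dd r A v = ∑ w ∈ A, if r v w then 1 else 0 := by
  rw [dd, Finset.card_filter]

lemma EE_mono {A B : Finset V} (h : A ⊆ B) : EE r A ≤ EE r B := by
  calc EE r A ≤ ∑ v ∈ A, dd r B v := Finset.sum_le_sum (fun v _ => dd_mono h v)
    _ ≤ EE r B := Finset.sum_le_sum_of_subset h

lemma EE_split (hsym : ∀ x y, r x y → r y x) {A S : Finset V} (hS : S ⊆ A)
    (hind : Ind r S) : EE r (A \ S) + 2 * ∑ v ∈ S, dd r A v = EE r A := by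
  classical
  have hsplitA : ∀ v, dd r A v = dd r (A \ S) v + dd r S v := by
    intro v
    simp only [dd_eq_sum]
    rw [← Finset.sum_sdiff hS]
  -- for v ∈ S, neighbours avoid S
  have hvS : ∀ v ∈ S, dd r S v = 0 := by
    intro v hv
    simp only [dd, Finset.card_eq_zero, Finset.filter_eq_empty_iff]
    exact fun x hx => hind v hv x hx
  have hswap : ∑ v ∈ A \ S, dd r S v = ∑ v ∈ S, dd r (A \ S) v := by
    simp only [dd_eq_sum]
    rw [Finset.sum_comm]
    refine Finset.sum_congr rfl fun v _ => Finset.sum_congr rfl fun w _ => ?_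
    by_cases h : r v w
    · simp [h, hsym v w h]
    · have h' : ¬ r w v := fun hh => h (hsym w v hh)
      simp [h, h']
  have hS2 : ∀ v ∈ S, dd r A v = dd r (A \ S) v := by
    intro v hv
    rw [hsplitA v, hvS v hv]; omega
  have : EE r A = ∑ v ∈ A \ S, dd r A v + ∑ v ∈ S, dd r A v := by
    rw [Finset.sum_sdiff hS]; rfl
  rw [this]
  have h1 : ∑ v ∈ A \ S, dd r A v
      = EE r (A \ S) + ∑ v ∈ S, dd r (A \ S) v := by
    unfold EE
    rw [← hswap, ← Finset.sum_add_distrib]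
    exact Finset.sum_congr rfl fun v _ => hsplitA v
  have h2 : ∑ v ∈ S, dd r (A \ S) v = ∑ v ∈ S, dd r A v :=
    Finset.sum_congr rfl fun v hv => (hS2 v hv).symm
  rw [h1, h2]; ring

lemma EE_erase (hsym : ∀ x y, r x y → r y x) (hirr : ∀ x, ¬ r x x)
    {A : Finset V} {v : V} (hv : v ∈ A) :
    EE r (A.erase v) + 2 * dd r A v = EE r A := by
  have := EE_split hsym (S := {v}) (A := A) (by simpa using hv)
    (by intro x hx y hy; simp only [Finset.mem_singleton] at hx hy; subst hx; subst hy; exact hirr _)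
  simpa [Finset.sdiff_singleton_eq_erase] using this

lemma EE_even (hsym : ∀ x y, r x y → r y x) (hirr : ∀ x, ¬ r x x)
    (A : Finset V) : ∃ e, EE r A = 2 * e := by
  classical
  induction A using Finset.strongInduction with
  | _ A ih =>
    rcases A.eq_empty_or_nonempty with rfl | ⟨v, hv⟩
    · exact ⟨0, by simp [EE]⟩
    · obtain ⟨e, he⟩ := ih (A.erase v) (Finset.erase_ssubset hv)
      exact ⟨e + dd r A v, by rw [← EE_erase hsym hirr hv, he]; ring⟩

/-- Extraction of a large independent set from a sparse set. -/
lemma indepExtract (hsym : ∀ x y, r x y → r y x) (hirr : ∀ x, ¬ r x x)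
    (A : Finset V) : ∃ S ⊆ A, Ind r S ∧ 2 * A.card ≤ EE r A + 2 * S.card := by
  classical
  induction A using Finset.strongInduction with
  | _ A ih =>
    by_cases hA : Ind r A
    · exact ⟨A, Finset.Subset.refl A, hA, by omega⟩
    · simp only [Ind, not_forall] at hA
      obtain ⟨x, hx, y, hy, hr⟩ := hA
      obtain ⟨S, hSsub, hSind, hScard⟩ := ih (A.erase x) (Finset.erase_ssubset hx)
      refine ⟨S, hSsub.trans (Finset.erase_subset _ _), hSind, ?_⟩
      have h1 : EE r (A.erase x) + 2 * dd r A x = EE r A := EE_erase hsym hirr hx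
      have h2 : 1 ≤ dd r A x := by
        rw [dd]
        refine Finset.card_pos.2 ⟨y, Finset.mem_filter.2 ⟨hy, not_not.mp hr⟩⟩
      have h3 : A.card = (A.erase x).card + 1 := by
        rw [Finset.card_erase_of_mem hx]
        have := Finset.card_pos.2 ⟨x, hx⟩
        omega
      omega


variable {V : Type*} [DecidableEq V]

/-- there is a subset of size `m` capturing at least an `m/|A|` fraction of the total weight -/
lemma topSum (d : V → ℕ) : ∀ (m : ℕ) (A : Finset V), m ≤ A.card →
    ∃ T ⊆ A, T.card = m ∧ m * (∑ v ∈ A, d v) ≤ A.card * ∑ v ∈ T, d v := by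
  intro m
  induction m with
  | zero => intro A _; exact ⟨∅, Finset.empty_subset A, rfl, by simp⟩
  | succ m ih =>
    intro A hm
    have hne : A.Nonempty := Finset.card_pos.1 (by omega)
    obtain ⟨v, hv, hmax⟩ := Finset.exists_max_image A d hne
    set A' := A.erase v with hA'
    have hA'card : A'.card = A.card - 1 := Finset.card_erase_of_mem hv
    have hcardpos : 1 ≤ A.card := Finset.card_pos.2 hne
    obtain ⟨T', hT'sub, hT'card, hT'⟩ := ih A' (by omega)
    have hvT' : v ∉ T' := fun h => Finset.notMem_erase v A (hT'sub h)
    refine ⟨insert v T', Finset.insert_subset hv (hT'sub.trans (Finset.erase_subset _ _)),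
      by rw [Finset.card_insert_of_notMem hvT', hT'card], ?_⟩
    rw [Finset.sum_insert hvT']
    have hsplitA : ∑ w ∈ A, d w = d v + ∑ w ∈ A', d w := by
      rw [hA', ← Finset.add_sum_erase A d hv]
    have hdiff : ∑ w ∈ A', d w = ∑ w ∈ T', d w + ∑ w ∈ A' \ T', d w := by
      rw [add_comm, Finset.sum_sdiff hT'sub]
    have hDbound : ∑ w ∈ A' \ T', d w ≤ (A'.card - T'.card) * d v := by
      rw [← Finset.card_sdiff_of_subset hT'sub]
      calc ∑ w ∈ A' \ T', d w ≤ ∑ _w ∈ A' \ T', d v := by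
            refine Finset.sum_le_sum fun w hw => hmax w ?_
            exact Finset.erase_subset _ _ (Finset.mem_sdiff.1 hw).1
        _ = (A' \ T').card * d v := by rw [Finset.sum_const, smul_eq_mul]
    -- abbreviations
    set a := d v
    set S' := ∑ w ∈ T', d w
    set D := ∑ w ∈ A' \ T', d w
    obtain ⟨q, hq⟩ : ∃ q, A.card = m + 1 + q := ⟨A.card - (m+1), by omega⟩
    have hn' : A'.card = m + q := by omega
    have hqq : A'.card - T'.card = q := by omega
    rw [hdiff, hn'] at hT'
    rw [hqq] at hDbound
    rw [hsplitA, hdiff, hq]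
    nlinarith [hT', hDbound]
lemma greedy (r : V → V → Prop) [DecidableRel r] (hsym : ∀ x y, r x y → r y x)
    (hirr : ∀ x, ¬ r x x) (A : Finset V) (Δ : ℕ) (hΔ : ∀ v ∈ A, dd r A v ≤ Δ) :
    ∀ (s : ℕ) (A' T : Finset V), A' ⊆ A → T ⊆ A' → s * (Δ+1) ≤ A'.card →
      T.card ≤ s * (Δ+1) →
    ∃ S, S ⊆ A' ∧ S.card = s ∧ Ind r S ∧
      ∑ v ∈ T, dd r A v ≤ (Δ+1) * ∑ v ∈ S, dd r A v := by
  intro s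
  induction s with
  | zero =>
    intro A' T _ _ _ hT
    have : T = ∅ := Finset.card_eq_zero.1 (by omega)
    subst this
    exact ⟨∅, Finset.empty_subset _, rfl, by intro x hx; simp at hx, by simp⟩
  | succ s ih =>
    intro A' T hA' hT hcard hTcard
    have hexp : (s+1) * (Δ+1) = s * (Δ+1) + (Δ+1) := by ring
    rw [hexp] at hcard hTcard
    have hne : A'.Nonempty := Finset.card_pos.1 (by omega)
    obtain ⟨v, hv, hmax⟩ := Finset.exists_max_image A' (dd r A) hne
    set R := insert v (A'.filter (fun w => r v w)) with hR
    have hRcard : R.card ≤ Δ + 1 := by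
      refine (Finset.card_insert_le _ _).trans ?_
      have h1 : A'.filter (fun w => r v w) ⊆ A.filter (r v) :=
        Finset.filter_subset_filter _ hA'
      have := Finset.card_le_card h1
      have h2 := hΔ v (hA' hv)
      rw [dd] at h2
      omega
    set A'' := A' \ R with hA''
    have hA''sub : A'' ⊆ A' := Finset.sdiff_subset
    have hA''card : s * (Δ+1) ≤ A''.card := by
      have h1 := Finset.le_card_sdiff R A'
      rw [← hA''] at h1
      omega
    set T'' := T \ R with hT''
    obtain ⟨T', hT'sub, hT'card⟩ :=
      Finset.exists_subset_card_eq (min_le_left T''.card (s * (Δ+1)))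
    have hT'A'' : T' ⊆ A'' := hT'sub.trans (Finset.sdiff_subset_sdiff hT Finset.Subset.rfl)
    have hT'T : T' ⊆ T := hT'sub.trans Finset.sdiff_subset
    have hmin : T'.card = T''.card ∨ T'.card = s * (Δ+1) := by
      rw [hT'card]; exact min_choice _ _
    have hminle : T'.card ≤ s * (Δ+1) := by rw [hT'card]; exact min_le_right _ _
    have hremcard : (T \ T').card ≤ Δ + 1 := by
      rw [Finset.card_sdiff_of_subset hT'T]
      have h1 := Finset.le_card_sdiff R T
      rw [← hT''] at h1
      have h2 := Finset.card_le_card hT'T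
      omega
    obtain ⟨S', hS'sub, hS'card, hS'ind, hS'⟩ := ih A'' T' (hA''sub.trans hA')
      hT'A'' hA''card hminle
    have hvS' : v ∉ S' := fun h => by
      have := hS'sub h
      rw [hA''] at this
      exact (Finset.mem_sdiff.1 this).2 (Finset.mem_insert_self _ _)
    refine ⟨insert v S', Finset.insert_subset hv (hS'sub.trans hA''sub),
      by rw [Finset.card_insert_of_notMem hvS', hS'card], ?_, ?_⟩
    · -- independence
      intro x hx y hy
      rcases Finset.mem_insert.1 hx with rfl | hx' <;>
        rcases Finset.mem_insert.1 hy with rfl | hy'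
      · exact hirr _
      · intro hr
        have hyA' : y ∈ A' := hA''sub (hS'sub hy')
        have : y ∈ R := Finset.mem_insert_of_mem (Finset.mem_filter.2 ⟨hyA', hr⟩)
        exact (Finset.mem_sdiff.1 (hS'sub hy')).2 this
      · intro hr
        have hr' := hsym _ _ hr
        have hxA' : x ∈ A' := hA''sub (hS'sub hx')
        have : x ∈ R := Finset.mem_insert_of_mem (Finset.mem_filter.2 ⟨hxA', hr'⟩)
        exact (Finset.mem_sdiff.1 (hS'sub hx')).2 this
      · exact hS'ind x hx' y hy'
    · -- weight
      rw [Finset.sum_insert hvS']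
      have hsplit : ∑ w ∈ T \ T', dd r A w + ∑ w ∈ T', dd r A w = ∑ w ∈ T, dd r A w :=
        Finset.sum_sdiff hT'T
      have hrem : ∑ w ∈ T \ T', dd r A w ≤ (Δ + 1) * dd r A v := by
        calc ∑ w ∈ T \ T', dd r A w ≤ ∑ _w ∈ T \ T', dd r A v :=
              Finset.sum_le_sum fun w hw => hmax w (hT (Finset.mem_sdiff.1 hw).1)
          _ = (T \ T').card * dd r A v := by rw [Finset.sum_const, smul_eq_mul]
          _ ≤ (Δ + 1) * dd r A v := Nat.mul_le_mul_right _ hremcard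
      calc ∑ w ∈ T, dd r A w = ∑ w ∈ T \ T', dd r A w + ∑ w ∈ T', dd r A w := hsplit.symm
        _ ≤ (Δ+1) * dd r A v + (Δ+1) * ∑ v ∈ S', dd r A v := by
            exact Nat.add_le_add hrem hS'
        _ = (Δ+1) * (dd r A v + ∑ v ∈ S', dd r A v) := by ring


lemma choose_two_succ (n : ℕ) : (n+1).choose 2 = n.choose 2 + n := by
  rw [Nat.choose_succ_succ, Nat.choose_one_right, Nat.add_comm]

lemma two_mul_choose_two (n : ℕ) : 2 * n.choose 2 = n * (n-1) := by
  induction n with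
  | zero => rfl
  | succ n ih =>
    rw [choose_two_succ, Nat.mul_add, ih]
    rcases n with _ | m
    · rfl
    · simp [Nat.succ_sub_one]; ring


lemma arith_fact (p k e B ch1 ch2 : ℕ) (hp : 3 ≤ p)
    (hch1 : 2 * ch1 = (k+1) * k) (hch2 : 2 * ch2 = (k+2) * (k+1))
    (he1 : e + 1 ≤ ch2) (he2 : e ≤ k * p)
    (hBmin : (B = ch1 - 1 ∧ ch1 - 1 ≤ (k-1)*p) ∨ (B = (k-1)*p ∧ (k-1)*p ≤ ch1 - 1)) :
    e - B ≤ k + 1 ∧ (1 ≤ e - B → (k+1) * (e - B) ≤ 2 * e) := by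
  rcases Nat.lt_or_ge k 2 with hk | hk
  · -- k = 0 or 1 : products are linear, omega can finish
    interval_cases k
    · simp at hch1 hch2 he2
      omega
    · simp at hch1 hch2 he2
      rcases hBmin with ⟨hB, _⟩ | ⟨hB, _⟩ <;> omega
  · obtain ⟨k'', rfl⟩ : ∃ k'', k = 2 + k'' := ⟨k - 2, by omega⟩
    have hY : (3+k'') * (2+k'') = 2 * ch1 := by rw [hch1]; ring
    have hZ : (4+k'') * (3+k'') = 2 * ch2 := by rw [hch2]; ring
    have hch1pos : 1 ≤ ch1 := by nlinarith
    have hYZ : (3+k'')*(2+k'') + 2*(3+k'') = (4+k'')*(3+k'') := by ring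
    have hch21 : ch2 = ch1 + (3 + k'') := by omega
    rcases hBmin with ⟨hB, _⟩ | ⟨hB, hmin⟩
    · -- B = ch1 - 1
      have hck : e - B ≤ 2 + k'' + 1 := by omega
      refine ⟨hck, fun hc1 => ?_⟩
      have m1 : (1+k'') * (e - B) ≤ (1+k'') * (3+k'') :=
        Nat.mul_le_mul_left _ (by omega)
      have m2 : (1+k'')*(3+k'') + (k''+3) = (3+k'')*(2+k'') := by ring
      have g1 : (2+k''+1) * (e - B) = (1+k'') * (e - B) + 2 * (e - B) := by ring
      omega
    · -- B = (k-1)*p = (1+k'')*p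
      have hB2 : B = (1+k'') * p := by
        rw [hB]
        have h : 2+k''-1 = 1+k'' := by omega
        rw [h]
      have hmin2 : (1+k'') * p ≤ ch1 - 1 := by
        have h : 2+k''-1 = 1+k'' := by omega
        rwa [h] at hmin
      have hkp : (2+k'') * p = (1+k'') * p + p := by ring
      have hcp : e - B ≤ p := by omega
      have w1 : (1+k'') * (2*p) = 2 * ((1+k'') * p) := by ring
      have w2 : (1+k'')*(4+k'') + 2 = (3+k'')*(2+k'') := by ring
      have w3 : (1+k'') * (2*p) ≤ (1+k'') * (4+k'') := by omega
      have w4 : 2 * p ≤ 4 + k'' := Nat.le_of_mul_le_mul_left w3 (by omega)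
      refine ⟨by omega, fun hc1 => ?_⟩
      have m1 : (1+k'') * (e - B) ≤ (1+k'') * p := Nat.mul_le_mul_left _ hcp
      have g1 : (2+k''+1) * (e - B) = (1+k'') * (e - B) + 2 * (e - B) := by ring
      omega

lemma step_exists (r : V → V → Prop) [DecidableRel r] (hsym : ∀ x y, r x y → r y x)
    (hirr : ∀ x, ¬ r x x) (p : ℕ) (hp : 3 ≤ p) (k : ℕ) (A : Finset V)
    (hcard : A.card = (k+1) * p)
    (h1 : EE r A ≤ 2 * ((k+2).choose 2 - 1)) (h2 : EE r A ≤ 2 * (k * p)) :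
    ∃ S, S ⊆ A ∧ S.card = p ∧ Ind r S ∧
      EE r (A \ S) ≤ 2 * min ((k+1).choose 2 - 1) ((k-1) * p) := by
  classical
  obtain ⟨e, he⟩ := EE_even hsym hirr A
  set B := min ((k+1).choose 2 - 1) ((k-1) * p) with hB
  have he1 : e ≤ (k+2).choose 2 - 1 := by omega
  have he2 : e ≤ k * p := by omega
  have h2ch1 : 2 * ((k+1).choose 2) = (k+1) * k := by
    rw [two_mul_choose_two]; simp
  have h2ch2 : 2 * ((k+2).choose 2) = (k+2) * (k+1) := by
    rw [two_mul_choose_two]; simp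
  have hch2pos : 1 ≤ (k+2).choose 2 := by
    have : 2 * 1 ≤ (k+2) * (k+1) := Nat.mul_le_mul (by omega) (by omega)
    omega
  have he1' : e + 1 ≤ (k+2).choose 2 := by omega
  have hBmin : (B = (k+1).choose 2 - 1 ∧ (k+1).choose 2 - 1 ≤ (k-1)*p) ∨
      (B = (k-1)*p ∧ (k-1)*p ≤ (k+1).choose 2 - 1) := by
    rcases le_total ((k+1).choose 2 - 1) ((k-1) * p) with hmin | hmin
    · exact Or.inl ⟨min_eq_left hmin, hmin⟩
    · exact Or.inr ⟨min_eq_right hmin, hmin⟩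
  set c := e - B with hc
  obtain ⟨hck, hkc⟩ := arith_fact p k e B ((k+1).choose 2) ((k+2).choose 2)
    hp h2ch1 h2ch2 he1' he2 hBmin
  rw [← hc] at hck hkc
  have hkp1 : (k+1) * p = k * p + p := by ring
  have hpe : e + p ≤ (k+1) * p := by omega
  by_cases hc0 : c = 0
  · -- any independent p-set will do
    obtain ⟨S₀, hS₀A, hS₀ind, hS₀card⟩ := indepExtract hsym hirr A
    have hS₀big : p ≤ S₀.card := by omega
    obtain ⟨S, hSsub, hScard⟩ := Finset.exists_subset_card_eq hS₀big
    have hEm : EE r (A \ S) ≤ EE r A := EE_mono Finset.sdiff_subset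
    exact ⟨S, hSsub.trans hS₀A, hScard, hS₀ind.mono hSsub, by omega⟩
  · have hc1 : 1 ≤ c := by omega
    have hfinish : ∀ S, S ⊆ A → S.card = p → Ind r S →
        c ≤ ∑ w ∈ S, dd r A w →
        ∃ S, S ⊆ A ∧ S.card = p ∧ Ind r S ∧ EE r (A \ S) ≤ 2 * B := by
      intro S hSA hScard hSind hsum
      have hEs := EE_split hsym hSA hSind
      exact ⟨S, hSA, hScard, hSind, by omega⟩
    by_cases hbig : ∃ v ∈ A, c ≤ dd r A v
    · obtain ⟨v, hv, hdv⟩ := hbig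
      set N := (A.erase v).filter (fun w => ¬ r v w) with hN
      have hNA : N ⊆ A := (Finset.filter_subset _ _).trans (Finset.erase_subset _ _)
      have hNcard : N.card + dd r A v + 1 = A.card := by
        have hsp := Finset.card_filter_add_card_filter_not
          (s := A.erase v) (p := fun w => r v w)
        have heq : (A.erase v).filter (fun w => r v w) = A.filter (r v) := by
          ext w
          simp only [Finset.mem_filter, Finset.mem_erase]
          constructor
          · rintro ⟨⟨_, hw⟩, hr⟩; exact ⟨hw, hr⟩
          · rintro ⟨hw, hr⟩
            refine ⟨⟨?_, hw⟩, hr⟩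
            rintro rfl; exact hirr _ hr
        have hav : 1 ≤ A.card := Finset.card_pos.2 ⟨v, hv⟩
        have her : (A.erase v).card = A.card - 1 := Finset.card_erase_of_mem hv
        rw [heq, ← hN] at hsp
        have hdd : dd r A v = (A.filter (r v)).card := rfl
        omega
      have hEEN : EE r N + 2 * dd r A v ≤ EE r A := by
        have hm : EE r N ≤ EE r (A.erase v) := EE_mono (Finset.filter_subset _ _)
        have := EE_erase hsym hirr hv
        omega
      obtain ⟨S₀, hS₀N, hS₀ind, hS₀card⟩ := indepExtract hsym hirr N
      have hS₀big : p - 1 ≤ S₀.card := by omega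
      obtain ⟨S₁, hS₁sub, hS₁card⟩ := Finset.exists_subset_card_eq hS₀big
      have hS₁N : S₁ ⊆ N := hS₁sub.trans hS₀N
      have hvS₁ : v ∉ S₁ := fun h =>
        Finset.notMem_erase v A ((Finset.filter_subset _ _) (hS₁N h))
      refine hfinish (insert v S₁) (Finset.insert_subset hv (hS₁N.trans hNA))
        (by rw [Finset.card_insert_of_notMem hvS₁, hS₁card]; omega) ?_ ?_
      · intro x hx y hy
        rcases Finset.mem_insert.1 hx with rfl | hx' <;>
          rcases Finset.mem_insert.1 hy with rfl | hy'
        · exact hirr _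
        · exact (Finset.mem_filter.1 (hS₁N hy')).2
        · intro hr
          exact (Finset.mem_filter.1 (hS₁N hx')).2 (hsym _ _ hr)
        · exact hS₀ind.mono hS₁sub x hx' y hy'
      · rw [Finset.sum_insert hvS₁]
        exact le_trans hdv (Nat.le_add_right _ _)
    · push_neg at hbig
      set Δ := c - 1 with hΔdef
      have hΔ : ∀ v ∈ A, dd r A v ≤ Δ := fun v hv => by
        have := hbig v hv; omega
      have hΔ1 : Δ + 1 = c := by omega
      have hpc : p * (Δ + 1) ≤ A.card := by
        rw [hΔ1, hcard]
        calc p * c ≤ p * (k+1) := Nat.mul_le_mul_left _ hck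
          _ = (k+1) * p := Nat.mul_comm _ _
      obtain ⟨T, hTA, hTcard, hT⟩ := topSum (dd r A) (p * (Δ+1)) A hpc
      obtain ⟨S, hSA, hScard, hSind, hS⟩ := greedy r hsym hirr A Δ hΔ p A T
        (Finset.Subset.refl _) hTA hpc (le_of_eq hTcard)
      refine hfinish S hSA hScard hSind ?_
      -- the chain of inequalities
      have hEA : ∑ v ∈ A, dd r A v = 2 * e := he
      rw [hEA] at hT
      have hchain : (p * c) * (2 * e) ≤ (p * c) * ((k+1) * ∑ v ∈ S, dd r A v) := by
        calc (p * c) * (2 * e) = (p * (Δ+1)) * (2 * e) := by rw [hΔ1]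
          _ ≤ A.card * ∑ v ∈ T, dd r A v := hT
          _ ≤ A.card * ((Δ+1) * ∑ v ∈ S, dd r A v) := Nat.mul_le_mul_left _ hS
          _ = ((k+1) * p) * (c * ∑ v ∈ S, dd r A v) := by rw [hcard, hΔ1]
          _ = (p * c) * ((k+1) * ∑ v ∈ S, dd r A v) := by ring
      have h2S : 2 * e ≤ (k+1) * ∑ v ∈ S, dd r A v :=
        Nat.le_of_mul_le_mul_left hchain (by positivity)
      have := hkc hc1
      exact Nat.le_of_mul_le_mul_left (le_trans this h2S) (by omega)

lemma core (r : V → V → Prop) [DecidableRel r] (hsym : ∀ x y, r x y → r y x)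
    (hirr : ∀ x, ¬ r x x) (p : ℕ) (hp : 3 ≤ p) :
    ∀ (k : ℕ) (A : Finset V), A.card = k * p →
      EE r A ≤ 2 * ((k+1).choose 2 - 1) → EE r A ≤ 2 * ((k-1) * p) →
      ∃ L : List (Finset V), L.length = k ∧ L.Pairwise Disjoint ∧
        ∀ S ∈ L, S ⊆ A ∧ S.card = p ∧ Ind r S := by
  intro k
  induction k with
  | zero => intro A _ _ _; exact ⟨[], rfl, List.Pairwise.nil, by simp⟩
  | succ k ih =>
    intro A hcard h1 h2
    have h1' : EE r A ≤ 2 * ((k+2).choose 2 - 1) := h1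
    have h2' : EE r A ≤ 2 * (k * p) := by simpa using h2
    obtain ⟨S, hSA, hScard, hSind, hSE⟩ :=
      step_exists r hsym hirr p hp k A hcard h1' h2'
    have hAS : (A \ S).card = k * p := by
      rw [Finset.card_sdiff_of_subset hSA, hcard, hScard]
      have : (k+1) * p = k * p + p := by ring
      omega
    obtain ⟨L, hlen, hdisj, hmem⟩ := ih (A \ S) hAS
      (le_trans hSE (Nat.mul_le_mul_left _ (min_le_left _ _)))
      (le_trans hSE (Nat.mul_le_mul_left _ (min_le_right _ _)))
    refine ⟨S :: L, by simp [hlen], ?_, ?_⟩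
    · refine List.Pairwise.cons (fun T hT => ?_) hdisj
      have hTsub := (hmem T hT).1
      exact Finset.disjoint_left.2 fun x hxS hxT =>
        (Finset.mem_sdiff.1 (hTsub hxT)).2 hxS
    · intro T hT
      rcases List.mem_cons.1 hT with rfl | hT'
      · exact ⟨hSA, hScard, hSind⟩
      · obtain ⟨ha, hb, hc⟩ := hmem T hT'
        exact ⟨ha.trans Finset.sdiff_subset, hb, hc⟩

lemma card_filter_val_lt (N m : ℕ) (h : m ≤ N) :
    ((univ : Finset (Fin N)).filter (fun v => v.val < m)).card = m := by
  have heq : ((univ : Finset (Fin N)).filter (fun v => v.val < m))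
      = (univ : Finset (Fin m)).map ⟨Fin.castLE h, Fin.castLE_injective h⟩ := by
    ext x
    simp only [Finset.mem_filter, Finset.mem_map, Function.Embedding.coeFn_mk]
    constructor
    · intro hx
      exact ⟨⟨x.val, hx.2⟩, Finset.mem_univ _, Fin.ext rfl⟩
    · rintro ⟨y, -, rfl⟩
      exact ⟨Finset.mem_univ _, y.isLt⟩
  rw [heq]
  simp

lemma card_filter_pos_lt (N m : ℕ) (h : m ≤ N) (hm : 0 < m) :
    ((univ : Finset (Fin N)).filter (fun v => 0 < v.val ∧ v.val < m)).card = m - 1 := by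
  have hN : 0 < N := lt_of_lt_of_le hm h
  have heq : (univ : Finset (Fin N)).filter (fun v => 0 < v.val ∧ v.val < m)
      = ((univ : Finset (Fin N)).filter (fun v => v.val < m)).erase ⟨0, hN⟩ := by
    ext v
    simp only [Finset.mem_filter, Finset.mem_univ, true_and, Finset.mem_erase]
    constructor
    · rintro ⟨h1, h2⟩
      exact ⟨fun hv => by simp [hv] at h1, h2⟩
    · rintro ⟨h1, h2⟩
      refine ⟨?_, h2⟩
      rcases Nat.eq_zero_or_pos v.val with h0 | h0
      · exact absurd (Fin.ext h0) h1
      · exact h0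
  rw [heq, Finset.card_erase_of_mem, card_filter_val_lt N m h]
  simp [hm]

variable {n : ℕ} (G : SimpleGraph (Fin n)) [DecidableRel G.Adj]

lemma EE_eq_twice (G : SimpleGraph (Fin n)) [DecidableRel G.Adj] :
    EE G.Adj (univ : Finset (Fin n)) = 2 * G.edgeFinset.card := by
  rw [← SimpleGraph.sum_degrees_eq_twice_card_edges]
  refine Finset.sum_congr rfl fun v _ => ?_
  rw [SimpleGraph.degree, SimpleGraph.neighborFinset_eq_filter]
  rfl

lemma edgeCount_eq (G : SimpleGraph (Fin n)) [Fintype G.edgeSet] :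
    edgeCount G = G.edgeFinset.card := by
  rw [edgeCount, Nat.card_eq_fintype_card, SimpleGraph.edgeFinset_card]

lemma compl_card_split (G : SimpleGraph (Fin n)) [DecidableRel G.Adj] :
    G.edgeFinset.card + Gᶜ.edgeFinset.card = n.choose 2 := by
  classical
  have hdis : Disjoint G.edgeFinset Gᶜ.edgeFinset := by
    rw [SimpleGraph.disjoint_edgeFinset]
    exact disjoint_compl_right
  have hsup : (G ⊔ Gᶜ).edgeFinset = G.edgeFinset ∪ Gᶜ.edgeFinset := by
    simp [SimpleGraph.edgeFinset_sup]
  have htop : (G ⊔ Gᶜ) = ⊤ := sup_compl_eq_top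
  have := SimpleGraph.card_edgeFinset_top_eq_card_choose_two (V := Fin n)
  calc G.edgeFinset.card + Gᶜ.edgeFinset.card
      = (G.edgeFinset ∪ Gᶜ.edgeFinset).card := (Finset.card_union_of_disjoint hdis).symm
    _ = (G ⊔ Gᶜ).edgeFinset.card := by rw [hsup]
    _ = n.choose 2 := by
        have hfe : (G ⊔ Gᶜ).edgeFinset = (⊤ : SimpleGraph (Fin n)).edgeFinset := by
          ext e
          rw [SimpleGraph.mem_edgeFinset, SimpleGraph.mem_edgeFinset, htop]
        rw [hfe]
        convert this using 2
        simp


instance fromRelDec {V : Type*} [DecidableEq V] (r : V → V → Prop) [DecidableRel r] :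
    DecidableRel (SimpleGraph.fromRel r).Adj :=
  fun a b => decidable_of_iff _ (SimpleGraph.fromRel_adj r a b).symm

lemma contains_of_list {n k p : ℕ} (G : SimpleGraph (Fin n)) (L : List (Finset (Fin n)))
    (hlen : L.length = k) (hdisj : L.Pairwise Disjoint)
    (hmem : ∀ S ∈ L, S.card = p ∧ ∀ x ∈ S, ∀ y ∈ S, x ≠ y → G.Adj x y) :
    G.Contains (cliquesUnion k p) := by
  have hget : ∀ i : Fin k, (L.get (Fin.cast hlen.symm i)).card = p :=
    fun i => (hmem _ (L.get_mem _)).1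
  set F : Fin k × Fin p → Fin n :=
    fun a => ((L.get (Fin.cast hlen.symm a.1)).orderIsoOfFin (hget a.1) a.2 : Fin n) with hF
  have hmemF : ∀ a : Fin k × Fin p, F a ∈ L.get (Fin.cast hlen.symm a.1) :=
    fun a => Finset.coe_mem _
  have hdisj' : ∀ i j : Fin k, i ≠ j →
      Disjoint (L.get (Fin.cast hlen.symm i)) (L.get (Fin.cast hlen.symm j)) := by
    intro i j hij
    rcases lt_or_gt_of_ne (a := Fin.cast hlen.symm i) (b := Fin.cast hlen.symm j)
        (fun h => hij (by
          have h2 := congrArg Fin.val h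
          simp only [Fin.coe_cast] at h2
          exact Fin.val_injective h2)) with h | h
    · exact List.pairwise_iff_get.1 hdisj _ _ h
    · exact (List.pairwise_iff_get.1 hdisj _ _ h).symm
  have hinj : Function.Injective F := by
    rintro ⟨a1, a2⟩ ⟨b1, b2⟩ hab
    have h1 : a1 = b1 := by
      by_contra hne
      have h := hdisj' _ _ hne
      have := Finset.disjoint_left.1 h (hmemF (a1, a2))
      rw [hab] at this
      exact this (hmemF (b1, b2))
    subst h1
    have h2 : a2 = b2 :=
      ((L.get (Fin.cast hlen.symm a1)).orderIsoOfFin (hget a1)).injective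
        (Subtype.coe_injective hab)
    rw [h2]
  refine ⟨⟨F, hinj⟩, ?_⟩
  intro a b hab
  rw [cliquesUnion, SimpleGraph.fromRel_adj] at hab
  obtain ⟨hne, hor⟩ := hab
  have h1 : a.1 = b.1 := by rcases hor with h | h; exact h; exact h.symm
  have hS := hmem (L.get (Fin.cast hlen.symm a.1)) (L.get_mem _)
  refine hS.2 (F a) (hmemF a) (F b) ?_ (fun h => hne (hinj h))
  rw [h1]; exact hmemF b


-- ==== extremal constructions ====

def H1 (n k : ℕ) : SimpleGraph (Fin n) :=
  SimpleGraph.fromRel (fun x y => x.val < k+1 ∧ y.val < k+1)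

def H2 (n m : ℕ) : SimpleGraph (Fin n) :=
  SimpleGraph.fromRel (fun x y => x.val = 0 ∧ 0 < y.val ∧ y.val < m)

instance (n k : ℕ) : DecidableRel (H1 n k).Adj := fromRelDec _
instance (n m : ℕ) : DecidableRel (H2 n m).Adj := fromRelDec _

lemma H1_adj (n k : ℕ) (v w : Fin n) :
    (H1 n k).Adj v w ↔ v ≠ w ∧ v.val < k+1 ∧ w.val < k+1 := by
  rw [H1, SimpleGraph.fromRel_adj]
  tauto

lemma EE_H1 (n k : ℕ) (h : k + 1 ≤ n) : EE (H1 n k).Adj (univ : Finset (Fin n)) = (k+1) * k := by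
  have hdd : ∀ v : Fin n, dd (H1 n k).Adj univ v = if v.val < k+1 then k else 0 := by
    intro v
    by_cases hv : v.val < k+1
    · rw [if_pos hv, dd]
      have heq : univ.filter ((H1 n k).Adj v)
          = (univ.filter (fun w : Fin n => w.val < k+1)).erase v := by
        ext w
        simp only [Finset.mem_filter, Finset.mem_univ, true_and, Finset.mem_erase, H1_adj]
        constructor
        · rintro ⟨h1, _, h3⟩; exact ⟨fun hh => h1 hh.symm, h3⟩
        · rintro ⟨h1, h2⟩; exact ⟨fun hh => h1 hh.symm, hv, h2⟩
      rw [heq, Finset.card_erase_of_mem, card_filter_val_lt n (k+1) h]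
      · omega
      · simp only [Finset.mem_filter, Finset.mem_univ, true_and]; exact hv
    · rw [if_neg hv, dd]
      rw [Finset.card_eq_zero, Finset.filter_eq_empty_iff]
      intro w _
      rw [H1_adj]
      rintro ⟨-, h2, -⟩
      exact hv h2
  rw [EE]
  calc ∑ v ∈ univ, dd (H1 n k).Adj univ v
      = ∑ v ∈ (univ : Finset (Fin n)), if v.val < k+1 then k else 0 :=
        Finset.sum_congr rfl fun v _ => hdd v
    _ = ∑ _v ∈ (univ : Finset (Fin n)).filter (fun v => v.val < k+1), k :=
        (Finset.sum_filter _ _).symm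
    _ = (k+1) * k := by
        rw [Finset.sum_const, smul_eq_mul, card_filter_val_lt n (k+1) h]

lemma H2_adj (n m : ℕ) (v w : Fin n) :
    (H2 n m).Adj v w ↔ v ≠ w ∧
      ((v.val = 0 ∧ 0 < w.val ∧ w.val < m) ∨ (w.val = 0 ∧ 0 < v.val ∧ v.val < m)) := by
  rw [H2, SimpleGraph.fromRel_adj]

lemma EE_H2 (n p : ℕ) (hp : 3 ≤ p) (hpn : p ≤ n) :
    EE (H2 n (n-p+2)).Adj (univ : Finset (Fin n)) = 2 * (n - p + 1) := by
  set m := n - p + 2 with hm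
  have hmn : m ≤ n := by omega
  have hm0 : 0 < m := by omega
  have hn0 : 0 < n := by omega
  have hdd : ∀ v : Fin n, dd (H2 n m).Adj univ v
      = (if v.val = 0 then m - 1 else 0) + (if 0 < v.val ∧ v.val < m then 1 else 0) := by
    intro v
    rcases Nat.eq_zero_or_pos v.val with hv0 | hvpos
    · rw [if_pos hv0, if_neg (by omega), dd]
      have heq : univ.filter ((H2 n m).Adj v)
          = univ.filter (fun w : Fin n => 0 < w.val ∧ w.val < m) := by
        ext w
        simp only [Finset.mem_filter, Finset.mem_univ, true_and, H2_adj]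
        constructor
        · rintro ⟨hne, ⟨-, h2⟩ | ⟨hw0, h1, -⟩⟩
          · exact h2
          · omega
        · intro hw
          refine ⟨?_, Or.inl ⟨hv0, hw⟩⟩
          intro hvw
          rw [hvw] at hv0
          omega
      rw [heq, card_filter_pos_lt n m hmn hm0]
      omega
    · rw [if_neg (by omega)]
      by_cases hvm : v.val < m
      · rw [if_pos ⟨hvpos, hvm⟩, dd]
        have heq : univ.filter ((H2 n m).Adj v) = {(⟨0, hn0⟩ : Fin n)} := by
          ext w
          simp only [Finset.mem_filter, Finset.mem_univ, true_and, H2_adj,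
            Finset.mem_singleton]
          constructor
          · rintro ⟨hne, ⟨hv0, -, -⟩ | ⟨hw0, -, -⟩⟩
            · omega
            · exact Fin.ext hw0
          · rintro rfl
            exact ⟨fun hh => by rw [hh] at hvpos; simp at hvpos,
              Or.inr ⟨rfl, hvpos, hvm⟩⟩
        rw [heq, Finset.card_singleton]
      · rw [if_neg (by omega), dd, Finset.card_eq_zero, Finset.filter_eq_empty_iff]
        intro w _
        rw [H2_adj]
        rintro ⟨hne, ⟨hv0, -, -⟩ | ⟨-, -, hvm'⟩⟩
        · omega
        · omega
  rw [EE]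
  have hz : (⟨0, hn0⟩ : Fin n) ∈ (univ : Finset (Fin n)) := Finset.mem_univ _
  calc ∑ v ∈ univ, dd (H2 n m).Adj univ v
      = ∑ v ∈ (univ : Finset (Fin n)),
          ((if v.val = 0 then m - 1 else 0) + (if 0 < v.val ∧ v.val < m then 1 else 0)) :=
        Finset.sum_congr rfl fun v _ => hdd v
    _ = (∑ v ∈ (univ : Finset (Fin n)), if v.val = 0 then m - 1 else 0)
        + ∑ v ∈ (univ : Finset (Fin n)), (if 0 < v.val ∧ v.val < m then 1 else 0) :=
        Finset.sum_add_distrib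
    _ = (m - 1) + (m - 1) := by
        congr 1
        · rw [show (∑ v ∈ (univ : Finset (Fin n)), if v.val = 0 then m - 1 else 0)
              = ∑ v ∈ (univ : Finset (Fin n)), if v = ⟨0, hn0⟩ then m - 1 else 0 from
            Finset.sum_congr rfl fun v _ => by
              congr 1
              simp [Fin.ext_iff]]
          rw [Finset.sum_ite_eq' univ (⟨0, hn0⟩ : Fin n) (fun _ => m - 1), if_pos hz]
        · rw [← Finset.sum_filter, Finset.sum_const, smul_eq_mul, mul_one,
            card_filter_pos_lt n m hmn hm0]
    _ = 2 * (n - p + 1) := by omega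

lemma H1_not_contains (n k p : ℕ) (hn : n = k * p) (hk1 : k + 1 ≤ n) :
    ¬ (H1 n k)ᶜ.Contains (cliquesUnion k p) := by
  rintro ⟨f, hf⟩
  have hcard : Fintype.card (Fin k × Fin p) = Fintype.card (Fin n) := by
    simp [hn]
  have hbij : Function.Bijective f :=
    (Fintype.bijective_iff_injective_and_card f).2 ⟨f.injective, hcard⟩
  set e := Equiv.ofBijective f hbij with he
  have hlow : ((univ : Finset (Fin n)).filter (fun v => v.val < k+1)).card = k + 1 :=
    card_filter_val_lt n (k+1) hk1
  have hmaps : ∀ v ∈ (univ : Finset (Fin n)).filter (fun v => v.val < k+1),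
      (e.symm v).1 ∈ (univ : Finset (Fin k)) := fun _ _ => Finset.mem_univ _
  obtain ⟨x, hx, y, hy, hxy, hsame⟩ :=
    Finset.exists_ne_map_eq_of_card_lt_of_maps_to
      (by rw [hlow]; simp) hmaps
  have hab : e.symm x ≠ e.symm y := fun h => hxy (by
    have := congrArg e h
    simpa using this)
  have hadj : (cliquesUnion k p).Adj (e.symm x) (e.symm y) := by
    rw [cliquesUnion, SimpleGraph.fromRel_adj]
    exact ⟨hab, Or.inl hsame⟩
  have hGadj := hf hadj
  have hfx : f (e.symm x) = x := e.apply_symm_apply x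
  have hfy : f (e.symm y) = y := e.apply_symm_apply y
  rw [show f (e.symm x) = x from hfx, show f (e.symm y) = y from hfy] at hGadj
  rw [SimpleGraph.compl_adj] at hGadj
  refine hGadj.2 ?_
  rw [H1_adj]
  simp only [Finset.mem_filter] at hx hy
  exact ⟨hxy, hx.2, hy.2⟩

lemma H2_not_contains (n k p : ℕ) (hn : n = k * p) (hp : 3 ≤ p) (hk : 1 ≤ k) :
    ¬ (H2 n (n-p+2))ᶜ.Contains (cliquesUnion k p) := by
  rintro ⟨f, hf⟩
  set m := n - p + 2 with hm
  have hpn : p ≤ n := by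
    rw [hn]; exact Nat.le_mul_of_pos_left p hk
  have hn0 : 0 < n := by omega
  have hcard : Fintype.card (Fin k × Fin p) = Fintype.card (Fin n) := by simp [hn]
  have hbij : Function.Bijective f :=
    (Fintype.bijective_iff_injective_and_card f).2 ⟨f.injective, hcard⟩
  set e := Equiv.ofBijective f hbij with he
  set z : Fin n := ⟨0, hn0⟩ with hz
  set i₀ := (e.symm z).1 with hi₀
  set j₀ := (e.symm z).2 with hj₀
  have hmaps : ∀ j ∈ (univ : Finset (Fin p)).erase j₀,
      f (i₀, j) ∈ (univ : Finset (Fin n)).filter (fun v => ¬ v.val < m) := by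
    intro j hj
    have hjne : j ≠ j₀ := (Finset.mem_erase.1 hj).1
    have hab : (i₀, j) ≠ (e.symm z) := by
      intro h
      exact hjne (congrArg Prod.snd h)
    have hadj : (cliquesUnion k p).Adj (i₀, j) (e.symm z) := by
      rw [cliquesUnion, SimpleGraph.fromRel_adj]
      exact ⟨hab, Or.inl rfl⟩
    have hGadj := hf hadj
    have hfz : f (e.symm z) = z := e.apply_symm_apply z
    rw [hfz, SimpleGraph.compl_adj] at hGadj
    obtain ⟨hne, hnadj⟩ := hGadj
    simp only [Finset.mem_filter, Finset.mem_univ, true_and]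
    intro hlt
    have hpos : 0 < (f (i₀, j)).val := by
      rcases Nat.eq_zero_or_pos (f (i₀, j)).val with h0 | h0
      · exact absurd (Fin.ext (by simp [h0, hz])) hne
      · exact h0
    refine hnadj ?_
    rw [H2_adj]
    exact ⟨hne, Or.inr ⟨rfl, hpos, hlt⟩⟩
  have hinj : Set.InjOn (fun j => f (i₀, j)) ↑((univ : Finset (Fin p)).erase j₀) := by
    intro a _ b _ hab
    have := f.injective hab
    exact congrArg Prod.snd this
  have hcle := Finset.card_le_card_of_injOn _ hmaps hinj
  have h1 : ((univ : Finset (Fin p)).erase j₀).card = p - 1 := by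
    rw [Finset.card_erase_of_mem (Finset.mem_univ _)]
    simp
  have h2 : ((univ : Finset (Fin n)).filter (fun v => ¬ v.val < m)).card = p - 2 := by
    have := Finset.card_filter_add_card_filter_not
      (s := (univ : Finset (Fin n))) (p := fun v : Fin n => v.val < m)
    rw [card_filter_val_lt n m (by omega)] at this
    have hcu : (univ : Finset (Fin n)).card = n := by simp
    omega
  omega

lemma indep_to_clique {n : ℕ} (G : SimpleGraph (Fin n)) (S : Finset (Fin n))
    (hind : Ind Gᶜ.Adj S) : ∀ x ∈ S, ∀ y ∈ S, x ≠ y → G.Adj x y := by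
  intro x hx y hy hxy
  by_contra hA
  exact hind x hx y hy (SimpleGraph.compl_adj G x y |>.2 ⟨hxy, hA⟩)

lemma upper_of (n k p X : ℕ) (hn : n = k * p) (hp : 3 ≤ p) (hk : 1 ≤ k)
    (hX1 : X ≤ (k+1).choose 2 - 1) (hX2 : X ≤ (k-1) * p) (hXn : X + 1 ≤ n.choose 2)
    (G : SimpleGraph (Fin n)) (hnc : ¬ G.Contains (cliquesUnion k p)) :
    edgeCount G ≤ n.choose 2 - (X + 1) := by
  classical
  by_contra hgt
  push_neg at hgt
  apply hnc
  haveI : DecidableRel G.Adj := Classical.decRel _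
  have hsplit := compl_card_split G
  have hEG : edgeCount G = G.edgeFinset.card := edgeCount_eq G
  have hGc : Gᶜ.edgeFinset.card ≤ X := by omega
  have hEE : EE Gᶜ.Adj (univ : Finset (Fin n)) = 2 * Gᶜ.edgeFinset.card :=
    EE_eq_twice Gᶜ
  obtain ⟨L, hlen, hdisj, hmem⟩ := core Gᶜ.Adj (fun x y h => h.symm)
    (fun x => Gᶜ.irrefl) p hp k univ (by simp [hn]) (by omega) (by omega)
  refine contains_of_list G L hlen hdisj fun S hS => ?_
  obtain ⟨hsub, hcard, hind⟩ := hmem S hS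
  exact ⟨hcard, indep_to_clique G S hind⟩

lemma exists_of (n k p Y : ℕ) (H : SimpleGraph (Fin n)) [DecidableRel H.Adj]
    (hHcard : H.edgeFinset.card = Y)
    (hnotc : ¬ Hᶜ.Contains (cliquesUnion k p)) :
    ∃ G : SimpleGraph (Fin n), ¬ G.Contains (cliquesUnion k p) ∧
      edgeCount G = n.choose 2 - Y := by
  classical
  refine ⟨Hᶜ, hnotc, ?_⟩
  have hsplit := compl_card_split H
  have hEG : edgeCount Hᶜ = Hᶜ.edgeFinset.card := edgeCount_eq Hᶜ
  omega

end KP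

theorem stmt5 (k p : ℕ) (hp : 3 ≤ p) (hk : 1 ≤ k) :
    (k ≤ 2 * p - 2 →
      IsExtremalNumber (k * p) (cliquesUnion k p) ((k * p).choose 2 - (k + 1).choose 2)) ∧
    (2 * p - 1 ≤ k →
      IsExtremalNumber (k * p) (cliquesUnion k p) ((k * p).choose 2 - (k * p - p + 1))) := by
  classical
  obtain ⟨k', rfl⟩ : ∃ k', k = k' + 1 := ⟨k - 1, by omega⟩
  set k := k' + 1
  set n := k * p with hn
  have hkp : k + 1 ≤ n := by
    have h1 : k * 3 ≤ k * p := Nat.mul_le_mul_left k hp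
    have h2 : k * 3 = 3 * k := by ring
    omega
  have hpn : p ≤ n := by
    have h1 : 1 * p ≤ k * p := Nat.mul_le_mul_right p hk
    omega
  have hch : 2 * ((k+1).choose 2) = (k+1) * k := by
    rw [KP.two_mul_choose_two]; simp
  have hid1 : (k+1) * k = k' * (k+2) + 2 := by ring
  have hk1p : (k-1) * p = k' * p := by show (k' + 1 - 1) * p = k' * p; simp
  have hchn : 2 * (n.choose 2) = n * (n-1) := by
    rw [KP.two_mul_choose_two]
  have hn3 : 3 ≤ n := by omega
  have hnn : 2 * n ≤ n * (n - 1) := by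
    obtain ⟨q, hq⟩ : ∃ q, n = q + 3 := ⟨n - 3, by omega⟩
    rw [hq]
    have : q + 3 - 1 = q + 2 := by omega
    rw [this]
    nlinarith
  have hcc : (k+1).choose 2 ≤ n.choose 2 := Nat.choose_le_choose 2 hkp
  have hchpos : 1 ≤ (k+1).choose 2 := by omega
  constructor
  · -- k ≤ 2p - 2
    intro hk2
    have hk2' : k + 2 ≤ 2 * p := by omega
    -- (k+1).choose 2 - 1 ≤ (k-1) * p
    have hXb : (k+1).choose 2 - 1 ≤ (k-1) * p := by
      have m1 : k' * (k+2) ≤ k' * (2*p) := Nat.mul_le_mul_left k' hk2'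
      have m2 : k' * (2*p) = 2 * (k' * p) := by ring
      omega
    constructor
    · intro G hnc
      have := KP.upper_of n k p ((k+1).choose 2 - 1) hn hp hk
        (le_refl _) hXb (by omega) G hnc
      have he : (k+1).choose 2 - 1 + 1 = (k+1).choose 2 := by omega
      rwa [he] at this
    · -- existence : complement of clique on k+1 vertices
      have hEE1 := KP.EE_H1 n k hkp
      have hEEtw : KP.EE (KP.H1 n k).Adj (univ : Finset (Fin n))
          = 2 * (KP.H1 n k).edgeFinset.card := KP.EE_eq_twice _
      have hcard1 : (KP.H1 n k).edgeFinset.card = (k+1).choose 2 := by omega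
      exact KP.exists_of n k p ((k+1).choose 2) (KP.H1 n k) hcard1
        (KP.H1_not_contains n k p hn hkp)
  · -- 2p - 1 ≤ k
    intro hk2
    have hk2' : 2 * p ≤ k + 1 := by omega
    have hnp : n - p = (k-1) * p := by
      have : k * p = k' * p + p := by ring
      omega
    have hXb : n - p ≤ (k+1).choose 2 - 1 := by
      have m1 : k' * (2*p) ≤ k' * (k+2) := Nat.mul_le_mul_left k' (by omega)
      have m2 : k' * (2*p) = 2 * (k' * p) := by ring
      omega
    have hT : n - p + 1 = (n - p) + 1 := rfl
    constructor
    · intro G hnc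
      have := KP.upper_of n k p (n - p) hn hp hk hXb (by omega) (by omega) G hnc
      rwa [hT]
    · have hEE2 := KP.EE_H2 n p hp hpn
      have hEEtw : KP.EE (KP.H2 n (n-p+2)).Adj (univ : Finset (Fin n))
          = 2 * (KP.H2 n (n-p+2)).edgeFinset.card := KP.EE_eq_twice _
      have hcard2 : (KP.H2 n (n-p+2)).edgeFinset.card = n - p + 1 := by omega
      exact KP.exists_of n k p (n - p + 1) (KP.H2 n (n-p+2)) hcard2
        (KP.H2_not_contains n k p hn hp hk)
end

section
/- Let p ≥ 3, 1 ≤ s ≤ 3p-1, and n = 4p-1+s. If s ≡ 0 (mod 3), let J = (s/3)K_7 ∪ complement of K_{4p-1-4s/3}; if s ≡ 1 (mod 3), let J = ((s-4)/3)K_7 ∪ K_8 ∪ complement of K_{4p-(4s-1)/3}; if s ≡ 2 (mod 3), let J = ((s-8)/3)K_7 ∪ 2K_8 ∪ complement of K_{4p-(4s-5)/3}. Then J has n vertices, exactly 7s edges, and contains no four pairwise disjoint independent sets of size p. -/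
open SimpleGraph Finset

section Aux

open SimpleGraph

lemma edgeCount_bot {α : Type*} : edgeCount (⊥ : SimpleGraph α) = 0 := by
  simp [edgeCount]

lemma mapInl_mem {α β : Type*} {G : SimpleGraph α} {H : SimpleGraph β} {e : Sym2 α}
    (he : e ∈ G.edgeSet) : e.map Sum.inl ∈ (G ⊕g H).edgeSet := by
  induction e using Sym2.ind with
  | _ x y => simpa using he

lemma mapInr_mem {α β : Type*} {G : SimpleGraph α} {H : SimpleGraph β} {e : Sym2 β}
    (he : e ∈ H.edgeSet) : e.map Sum.inr ∈ (G ⊕g H).edgeSet := by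
  induction e using Sym2.ind with
  | _ x y => simpa using he

def sumEdgeMap {α β : Type*} (G : SimpleGraph α) (H : SimpleGraph β) :
    (G.edgeSet ⊕ H.edgeSet) → (G ⊕g H).edgeSet
  | Sum.inl e => ⟨e.1.map Sum.inl, mapInl_mem e.2⟩
  | Sum.inr e => ⟨e.1.map Sum.inr, mapInr_mem e.2⟩

lemma edgeCount_sum {α β : Type*} [Finite α] [Finite β]
    (G : SimpleGraph α) (H : SimpleGraph β) :
    edgeCount (G ⊕g H) = edgeCount G + edgeCount H := by
  classical
  have hbij : Function.Bijective (sumEdgeMap G H) := by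
    constructor
    · rintro (⟨e, he⟩ | ⟨e, he⟩) (⟨e', he'⟩ | ⟨e', he'⟩) h <;>
        simp only [sumEdgeMap, Subtype.mk.injEq] at h
      · exact congrArg Sum.inl (Subtype.ext (Sym2.map.injective Sum.inl_injective h))
      · exfalso
        induction e using Sym2.ind with
        | _ x y =>
          have : (Sum.inl x : α ⊕ β) ∈ Sym2.map Sum.inr e' := by
            rw [← h]; simp
          obtain ⟨z, _, hz⟩ := Sym2.mem_map.mp this
          exact Sum.inr_ne_inl hz
      · exfalso
        induction e using Sym2.ind with
        | _ x y =>
          have : (Sum.inr x : α ⊕ β) ∈ Sym2.map Sum.inl e' := by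
            rw [← h]; simp
          obtain ⟨z, _, hz⟩ := Sym2.mem_map.mp this
          exact Sum.inl_ne_inr hz
      · exact congrArg Sum.inr (Subtype.ext (Sym2.map.injective Sum.inr_injective h))
    · rintro ⟨e, he⟩
      induction e using Sym2.ind with
      | _ x y =>
        cases x with
        | inl x =>
          cases y with
          | inl y =>
            exact ⟨Sum.inl ⟨s(x, y), by simpa using he⟩, rfl⟩
          | inr y => simp at he
        | inr x =>
          cases y with
          | inl y => simp at he
          | inr y =>
            exact ⟨Sum.inr ⟨s(x, y), by simpa using he⟩, rfl⟩
  simpa [edgeCount, Nat.card_sum] using (Nat.card_eq_of_bijective _ hbij).symm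

instance cliquesUnion_adjDec (k q : ℕ) : DecidableRel (cliquesUnion k q).Adj := by
  unfold cliquesUnion
  intro x y
  rw [SimpleGraph.fromRel_adj]
  infer_instance

lemma cliquesUnion_degree (k q : ℕ) (hq : 1 ≤ q) (v : Fin k × Fin q) :
    (cliquesUnion k q).degree v = q - 1 := by
  classical
  have hne : (cliquesUnion k q).neighborFinset v
      = (Finset.univ.filter (fun w : Fin k × Fin q => w.1 = v.1)).erase v := by
    ext w
    simp only [SimpleGraph.mem_neighborFinset, Finset.mem_erase, Finset.mem_filter,
      Finset.mem_univ, true_and]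
    constructor
    · intro h
      rw [cliquesUnion, SimpleGraph.fromRel_adj] at h
      refine ⟨fun hh => h.1 hh.symm, ?_⟩
      rcases h.2 with h2 | h2
      · exact h2.symm
      · exact h2
    · rintro ⟨h1, h2⟩
      rw [cliquesUnion, SimpleGraph.fromRel_adj]
      exact ⟨fun hh => h1 hh.symm, Or.inr h2⟩
  have hfil : (Finset.univ.filter (fun w : Fin k × Fin q => w.1 = v.1))
      = Finset.univ.image (fun j : Fin q => (v.1, j)) := by
    ext w
    simp only [Finset.mem_filter, Finset.mem_univ, true_and, Finset.mem_image]
    constructor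
    · intro h
      exact ⟨w.2, by rw [← h]⟩
    · rintro ⟨j, rfl⟩; rfl
  have hcard : (Finset.univ.filter (fun w : Fin k × Fin q => w.1 = v.1)).card = q := by
    rw [hfil, Finset.card_image_of_injective _ (fun i j h => by simpa using h)]
    simp
  have hv : v ∈ Finset.univ.filter (fun w : Fin k × Fin q => w.1 = v.1) := by simp
  rw [SimpleGraph.degree, hne, Finset.card_erase_of_mem hv, hcard]

lemma edgeCount_cliquesUnion (k q : ℕ) (hq : 1 ≤ q) :
    2 * edgeCount (cliquesUnion k q) = k * q * (q - 1) := by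
  classical
  have h1 : edgeCount (cliquesUnion k q) = (cliquesUnion k q).edgeFinset.card := by
    rw [edgeCount, SimpleGraph.edgeFinset_card, Nat.card_eq_fintype_card]
  have h2 := (cliquesUnion k q).sum_degrees_eq_twice_card_edges
  have h3 : ∑ v : Fin k × Fin q, (cliquesUnion k q).degree v = k * q * (q - 1) := by
    rw [Finset.sum_congr rfl (fun v _ => cliquesUnion_degree k q hq v)]
    simp [Finset.card_univ, mul_comm]
  omega

lemma indep_card_le {k q : ℕ} (S : Finset (Fin k × Fin q))
    (h : ∀ x ∈ S, ∀ y ∈ S, ¬ (cliquesUnion k q).Adj x y) : S.card ≤ k := by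
  classical
  have hinj : Set.InjOn Prod.fst (S : Set (Fin k × Fin q)) := by
    intro x hx y hy hxy
    by_contra hne
    refine h x hx y hy ?_
    rw [cliquesUnion, SimpleGraph.fromRel_adj]
    exact ⟨hne, Or.inl hxy⟩
  calc S.card = (S.image Prod.fst).card := (Finset.card_image_of_injOn hinj).symm
    _ ≤ Fintype.card (Fin k) := by simpa using Finset.card_le_univ (S.image Prod.fst)
    _ = k := by simp

end Aux

theorem stmt12 (p s n a b c : ℕ) (hp : 3 ≤ p) (hs1 : 1 ≤ s) (hs2 : s ≤ 3 * p - 1)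
    (hn : n = 4 * p - 1 + s)
    (hcase : (s = 3 * a ∧ b = 0 ∧ n = 7 * a + 8 * b + c) ∨
             (s = 3 * a + 4 ∧ b = 1 ∧ n = 7 * a + 8 * b + c) ∨
             (s = 3 * a + 8 ∧ b = 2 ∧ n = 7 * a + 8 * b + c)) :
    Fintype.card ((Fin a × Fin 7) ⊕ ((Fin b × Fin 8) ⊕ Fin c)) = n ∧
    edgeCount (cliquesUnion a 7 ⊕g (cliquesUnion b 8 ⊕g (⊥ : SimpleGraph (Fin c)))) = 7 * s ∧
    ¬ HasFourIndep (cliquesUnion a 7 ⊕g (cliquesUnion b 8 ⊕g (⊥ : SimpleGraph (Fin c)))) p := by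
  classical
  have hkey : 4 * a + 4 * b + c = 4 * p - 1 := by omega
  refine ⟨by simp; omega, ?_, ?_⟩
  · rw [edgeCount_sum, edgeCount_sum, edgeCount_bot]
    have h7 := edgeCount_cliquesUnion a 7 (by norm_num)
    have h8 := edgeCount_cliquesUnion b 8 (by norm_num)
    omega
  · rintro ⟨I, hcard, hindep, hdisj⟩
    set L : Fin 4 → Finset (Fin a × Fin 7) := fun i => (I i).toLeft with hL
    set M : Fin 4 → Finset (Fin b × Fin 8) := fun i => (I i).toRight.toLeft with hM
    set R : Fin 4 → Finset (Fin c) := fun i => (I i).toRight.toRight with hR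
    have hLa : ∀ i, (L i).card ≤ a := by
      intro i
      refine indep_card_le _ ?_
      intro x hx y hy hadj
      have hx' : Sum.inl x ∈ I i := Finset.mem_toLeft.mp hx
      have hy' : Sum.inl y ∈ I i := Finset.mem_toLeft.mp hy
      exact hindep i _ hx' _ hy' (by simpa using hadj)
    have hMb : ∀ i, (M i).card ≤ b := by
      intro i
      refine indep_card_le _ ?_
      intro x hx y hy hadj
      have hx' : Sum.inr (Sum.inl x) ∈ I i :=
        Finset.mem_toRight.mp (Finset.mem_toLeft.mp hx)
      have hy' : Sum.inr (Sum.inl y) ∈ I i :=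
        Finset.mem_toRight.mp (Finset.mem_toLeft.mp hy)
      exact hindep i _ hx' _ hy' (by simpa using hadj)
    have hRdisj : ∀ i ∈ (Finset.univ : Finset (Fin 4)), ∀ j ∈ Finset.univ,
        i ≠ j → Disjoint (R i) (R j) := by
      intro i _ j _ hij
      rw [Finset.disjoint_left]
      intro x hxi hxj
      have h1 : Sum.inr (Sum.inr x) ∈ I i :=
        Finset.mem_toRight.mp (Finset.mem_toRight.mp hxi)
      have h2 : Sum.inr (Sum.inr x) ∈ I j :=
        Finset.mem_toRight.mp (Finset.mem_toRight.mp hxj)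
      exact Finset.disjoint_left.mp (hdisj i j hij) h1 h2
    have hRsum : ∑ i, (R i).card ≤ c := by
      calc ∑ i, (R i).card = (Finset.univ.biUnion R).card :=
            (Finset.card_biUnion hRdisj).symm
        _ ≤ Fintype.card (Fin c) := by simpa using Finset.card_le_univ (Finset.univ.biUnion R)
        _ = c := by simp
    have hdec : ∀ i : Fin 4, (L i).card + (M i).card + (R i).card = p := by
      intro i
      have h1 := Finset.card_toLeft_add_card_toRight (u := I i)
      have h2 := Finset.card_toLeft_add_card_toRight (u := (I i).toRight)
      rw [hcard i] at h1
      simp only [hL, hM, hR]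
      omega
    have hpbound : ∀ i : Fin 4, p ≤ a + b + (R i).card := by
      intro i
      have e1 := hdec i
      have e2 := hLa i
      have e3 := hMb i
      omega
    have h0 := hpbound 0
    have h1 := hpbound 1
    have h2 := hpbound 2
    have h3 := hpbound 3
    have hsum : (R 0).card + (R 1).card + (R 2).card + (R 3).card ≤ c := by
      rwa [Fin.sum_univ_four] at hRsum
    omega
end

section
/- For integers s and p with p ≥ 2, the quantity C(s,2) - t(s,p-1) equals 0 if 0 ≤ s ≤ p-1, equals s - (p-1) if p-1 ≤ s < 2(p-1), and equals 2s - 3(p-1) if 2(p-1) ≤ s ≤ 3(p-1). -/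
open SimpleGraph Finset

private lemma filter_univ_card' (s : ℕ) (P : ℕ → Prop) [DecidablePred P] :
    (Finset.univ.filter (fun w : Fin s => P w.val)).card = ((range s).filter P).card := by
  simp only [Finset.card_filter]
  exact Fin.sum_univ_eq_sum_range (fun i => if P i then 1 else 0) s

private lemma bridge' (s r : ℕ) :
    2 * turanEdges s r +
      (∑ v ∈ range s, ((range s).filter (fun w => w % r = v % r)).card) = s * s := by
  have h1 : turanEdges s r = (turanGraph s r).edgeFinset.card := by
    rw [turanEdges, edgeCount, Nat.card_eq_fintype_card, edgeFinset_card]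
  have h2 : ∀ v : Fin s, (turanGraph s r).degree v
      + ((range s).filter (fun w => w % r = (v : ℕ) % r)).card = s := by
    intro v
    rw [← filter_univ_card' s (fun w => w % r = (v : ℕ) % r), degree, neighborFinset_eq_filter]
    have he : (univ.filter ((turanGraph s r).Adj v))
        = univ.filter (fun w : Fin s => ¬ ((w : ℕ) % r = (v : ℕ) % r)) := by
      apply filter_congr; intro w _
      show ((v : ℕ) % r ≠ (w : ℕ) % r) ↔ _
      simp [ne_comm]
    rw [he, add_comm, card_filter_add_card_filter_not]
    simp
  rw [h1, ← sum_degrees_eq_twice_card_edges, ← Fin.sum_univ_eq_sum_range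
    (fun v => ((range s).filter (fun w => w % r = v % r)).card) s, ← Finset.sum_add_distrib]
  rw [Finset.sum_congr rfl (fun v _ => h2 v)]
  simp [mul_comm]


private lemma mod_eq_iff2' {r w m : ℕ} (hr : 0 < r) (hw : w < 2 * r) (hm : m < r) :
    w % r = m ↔ w = m ∨ w = m + r := by
  constructor
  · intro h
    have h1 := Nat.div_add_mod w r
    have h2 : w / r < 2 := Nat.div_lt_of_lt_mul (by omega)
    obtain ⟨q, hq⟩ : ∃ q, w / r = q := ⟨_, rfl⟩
    rw [hq] at h1 h2
    interval_cases q <;> omega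
  · rintro (rfl | rfl)
    · exact Nat.mod_eq_of_lt hm
    · rw [Nat.add_mod_right]; exact Nat.mod_eq_of_lt hm

private lemma mod_eq_iff3' {r w m : ℕ} (hr : 0 < r) (hw : w < 3 * r) (hm : m < r) :
    w % r = m ↔ w = m ∨ w = m + r ∨ w = m + 2 * r := by
  constructor
  · intro h
    have h1 := Nat.div_add_mod w r
    have h2 : w / r < 3 := Nat.div_lt_of_lt_mul (by omega)
    obtain ⟨q, hq⟩ : ∃ q, w / r = q := ⟨_, rfl⟩
    rw [hq] at h1 h2
    interval_cases q <;> omega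
  · rintro (rfl | rfl | rfl)
    · exact Nat.mod_eq_of_lt hm
    · rw [Nat.add_mod_right]; exact Nat.mod_eq_of_lt hm
    · rw [two_mul, ← add_assoc, Nat.add_mod_right, Nat.add_mod_right]
      exact Nat.mod_eq_of_lt hm

private lemma csum_case1' {s r : ℕ} (hsr : s ≤ r) :
    (∑ v ∈ range s, ((range s).filter (fun w => w % r = v % r)).card) = s := by
  have h : ∀ v ∈ range s, ((range s).filter (fun w => w % r = v % r)).card = 1 := by
    intro v hv
    rw [mem_range] at hv
    have : (range s).filter (fun w => w % r = v % r) = {v} := by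
      ext w
      simp only [mem_filter, mem_range, mem_singleton]
      constructor
      · rintro ⟨hw, h⟩
        rw [Nat.mod_eq_of_lt (by omega), Nat.mod_eq_of_lt (by omega)] at h
        exact h
      · rintro rfl; exact ⟨hv, rfl⟩
    rw [this, card_singleton]
  rw [Finset.sum_congr rfl h]
  simp

private lemma card_case2' {r t : ℕ} (hr : 0 < r) (ht : t ≤ r) (v : ℕ) :
    ((range (r + t)).filter (fun w => w % r = v % r)).card
      = if v % r < t then 2 else 1 := by
  have hm : v % r < r := Nat.mod_lt _ hr
  set m := v % r with hmdef
  split_ifs with h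
  · have : (range (r + t)).filter (fun w => w % r = m) = {m, m + r} := by
      ext w
      simp only [mem_filter, mem_range, mem_insert, mem_singleton]
      constructor
      · rintro ⟨hw, hwm⟩
        exact (mod_eq_iff2' hr (by omega) hm).mp hwm
      · rintro (rfl | rfl)
        · exact ⟨by omega, Nat.mod_eq_of_lt hm⟩
        · exact ⟨by omega, by rw [Nat.add_mod_right]; exact Nat.mod_eq_of_lt hm⟩
    rw [this]
    rw [card_insert_of_notMem (by simp; omega), card_singleton]
  · have : (range (r + t)).filter (fun w => w % r = m) = {m} := by
      ext w
      simp only [mem_filter, mem_range, mem_singleton]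
      constructor
      · rintro ⟨hw, hwm⟩
        rcases (mod_eq_iff2' hr (by omega) hm).mp hwm with rfl | rfl
        · rfl
        · omega
      · rintro rfl; exact ⟨by omega, Nat.mod_eq_of_lt hm⟩
    rw [this, card_singleton]

private lemma card_case3' {r t : ℕ} (hr : 0 < r) (ht : t ≤ r) (v : ℕ) :
    ((range (2 * r + t)).filter (fun w => w % r = v % r)).card
      = if v % r < t then 3 else 2 := by
  have hm : v % r < r := Nat.mod_lt _ hr
  set m := v % r with hmdef
  split_ifs with h
  · have : (range (2 * r + t)).filter (fun w => w % r = m) = {m, m + r, m + 2 * r} := by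
      ext w
      simp only [mem_filter, mem_range, mem_insert, mem_singleton]
      constructor
      · rintro ⟨hw, hwm⟩
        exact (mod_eq_iff3' hr (by omega) hm).mp hwm
      · rintro (rfl | rfl | rfl)
        · exact ⟨by omega, Nat.mod_eq_of_lt hm⟩
        · exact ⟨by omega, by rw [Nat.add_mod_right]; exact Nat.mod_eq_of_lt hm⟩
        · refine ⟨by omega, ?_⟩
          rw [two_mul, ← add_assoc, Nat.add_mod_right, Nat.add_mod_right]
          exact Nat.mod_eq_of_lt hm
    rw [this]
    rw [card_insert_of_notMem (by simp; omega), card_insert_of_notMem (by simp; omega),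
      card_singleton]
  · have : (range (2 * r + t)).filter (fun w => w % r = m) = {m, m + r} := by
      ext w
      simp only [mem_filter, mem_range, mem_insert, mem_singleton]
      constructor
      · rintro ⟨hw, hwm⟩
        rcases (mod_eq_iff3' hr (by omega) hm).mp hwm with rfl | rfl | rfl
        · left; rfl
        · right; rfl
        · omega
      · rintro (rfl | rfl)
        · exact ⟨by omega, Nat.mod_eq_of_lt hm⟩
        · exact ⟨by omega, by rw [Nat.add_mod_right]; exact Nat.mod_eq_of_lt hm⟩
    rw [this, card_insert_of_notMem (by simp; omega), card_singleton]


private lemma sum_ite_lt' (r t a b : ℕ) (ht : t ≤ r) :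
    ∑ v ∈ range r, (if v < t then a else b) = t * a + (r - t) * b := by
  have h : r = t + (r - t) := by omega
  rw [h, Finset.sum_range_add]
  have h1 : ∀ v ∈ range t, (if v < t then a else b) = a := by
    intro v hv; rw [mem_range] at hv; rw [if_pos hv]
  have h2 : ∀ v ∈ range (r - t), (if t + v < t then a else b) = b := by
    intro v hv; rw [if_neg (by omega)]
  rw [Finset.sum_congr rfl h1, Finset.sum_congr rfl h2, Finset.sum_const, Finset.sum_const,
    card_range, card_range, smul_eq_mul, smul_eq_mul]
  congr 2
  omega

private lemma sum_mod2' {r t : ℕ} (hr : 0 < r) (ht : t ≤ r) :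
    ∑ v ∈ range (r + t), (if v % r < t then 2 else 1) = r + 3 * t := by
  rw [Finset.sum_range_add]
  have h1 : ∀ v ∈ range r, (if v % r < t then 2 else 1) = if v < t then 2 else 1 := by
    intro v hv; rw [mem_range] at hv; rw [Nat.mod_eq_of_lt hv]
  have h2 : ∀ v ∈ range t, (if (r + v) % r < t then 2 else 1) = 2 := by
    intro v hv; rw [mem_range] at hv
    rw [Nat.add_mod_left, Nat.mod_eq_of_lt (by omega), if_pos (by omega)]
  rw [Finset.sum_congr rfl h1, Finset.sum_congr rfl h2, Finset.sum_const, smul_eq_mul,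
    card_range, sum_ite_lt' r t 2 1 ht]
  omega

private lemma sum_mod3' {r t : ℕ} (hr : 0 < r) (ht : t ≤ r) :
    ∑ v ∈ range (2 * r + t), (if v % r < t then 3 else 2) = 4 * r + 5 * t := by
  have h2r : 2 * r + t = r + (r + t) := by ring
  rw [h2r, Finset.sum_range_add, Finset.sum_range_add]
  have h1 : ∀ v ∈ range r, (if v % r < t then 3 else 2) = if v < t then 3 else 2 := by
    intro v hv; rw [mem_range] at hv; rw [Nat.mod_eq_of_lt hv]
  have h1' : ∀ v ∈ range r, (if (r + v) % r < t then 3 else 2) = if v < t then 3 else 2 := by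
    intro v hv; rw [mem_range] at hv; rw [Nat.add_mod_left, Nat.mod_eq_of_lt hv]
  have h2 : ∀ v ∈ range t, (if (r + (r + v)) % r < t then 3 else 2) = 3 := by
    intro v hv; rw [mem_range] at hv
    rw [Nat.add_mod_left, Nat.add_mod_left, Nat.mod_eq_of_lt (by omega), if_pos (by omega)]
  rw [Finset.sum_congr rfl h1, Finset.sum_congr rfl h1', Finset.sum_congr rfl h2,
    Finset.sum_const, smul_eq_mul, card_range, sum_ite_lt' r t 3 2 ht]
  omega

theorem stmt18 (s p : ℕ) (hp : 2 ≤ p) :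
    (s ≤ p - 1 → s.choose 2 - turanEdges s (p - 1) = 0) ∧
    (p - 1 ≤ s → s < 2 * (p - 1) →
      s.choose 2 - turanEdges s (p - 1) = s - (p - 1)) ∧
    (2 * (p - 1) ≤ s → s ≤ 3 * (p - 1) →
      s.choose 2 - turanEdges s (p - 1) = 2 * s - 3 * (p - 1)) := by
  set r := p - 1 with hrdef
  have hr : 0 < r := by omega
  refine ⟨?_, ?_, ?_⟩
  · intro h
    have hch : 2 * s.choose 2 = s * s - s := by
      rw [Nat.choose_two_right, Nat.mul_div_cancel' (Nat.even_mul_pred_self s).two_dvd]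
      cases s <;> simp [Nat.succ_sub_one, Nat.mul_succ]
    have hb := bridge' s r
    rw [csum_case1' h] at hb
    obtain ⟨q, hq⟩ : ∃ q, s * s = q := ⟨_, rfl⟩
    rw [hq] at hb hch
    omega
  · intro h1 h2
    obtain ⟨t, htr, rfl⟩ : ∃ t, t ≤ r ∧ s = r + t := ⟨s - r, by omega, by omega⟩
    have hch : 2 * (r + t).choose 2 = (r + t) * (r + t) - (r + t) := by
      rw [Nat.choose_two_right, Nat.mul_div_cancel' (Nat.even_mul_pred_self _).two_dvd]
      cases h : r + t <;> simp [Nat.succ_sub_one, Nat.mul_succ]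
    have hb := bridge' (r + t) r
    rw [Finset.sum_congr rfl (fun v _ => card_case2' hr htr v), sum_mod2' hr htr] at hb
    obtain ⟨q, hq⟩ : ∃ q, (r + t) * (r + t) = q := ⟨_, rfl⟩
    rw [hq] at hb hch
    omega
  · intro h1 h2
    obtain ⟨t, htr, rfl⟩ : ∃ t, t ≤ r ∧ s = 2 * r + t := ⟨s - 2 * r, by omega, by omega⟩
    have hch : 2 * (2 * r + t).choose 2 = (2 * r + t) * (2 * r + t) - (2 * r + t) := by
      rw [Nat.choose_two_right, Nat.mul_div_cancel' (Nat.even_mul_pred_self _).two_dvd]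
      cases h : 2 * r + t <;> simp [Nat.succ_sub_one, Nat.mul_succ]
    have hb := bridge' (2 * r + t) r
    rw [Finset.sum_congr rfl (fun v _ => card_case3' hr htr v), sum_mod3' hr htr] at hb
    obtain ⟨q, hq⟩ : ∃ q, (2 * r + t) * (2 * r + t) = q := ⟨_, rfl⟩
    rw [hq] at hb hch
    omega
end
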